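/- arXiv:1612.03007 — 9 statements merged into one kernel-verified Lean document; each statement's English description precedes it below -/
import Mathlib

section
/- Let x̄ ∈ ℝ and C, p, s > 0. Suppose U : [x̄, ∞) → [0, ∞) is nonincreasing and satisfies (y − x)^p · U(y) ≤ C · U(x)^{1+s} for all y ≥ x ≥ x̄. Then U(y) = 0 for every y ≥ x̄ + B, where B > 0 is defined by B^p = C · U(x̄)^s · 2^{p(s+1)/s}. -/
set_option maxHeartbeats 1000000 in

/-- **Stampacchia's lemma.** If `U : [x₀, ∞) → [0, ∞)` is nonincreasing and satisfies
`(y - x)^p * U y ≤ C * (U x)^(1+s)` for all `y ≥ x ≥ x₀`, then `U` vanishes on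
`[x₀ + B, ∞)` where `B^p = C * (U x₀)^s * 2^(p*(s+1)/s)`. -/
theorem stampacchia (x₀ C p s : ℝ) (hC : 0 < C) (hp : 0 < p) (hs : 0 < s)
    (U : ℝ → ℝ)
    (hU0 : ∀ y, x₀ ≤ y → 0 ≤ U y)
    (hUmono : ∀ x y, x₀ ≤ x → x ≤ y → U y ≤ U x)
    (hrec : ∀ x y, x₀ ≤ x → x ≤ y → (y - x) ^ p * U y ≤ C * (U x) ^ (1 + s))
    (B : ℝ) (hB : 0 < B)
    (hBp : B ^ p = C * (U x₀) ^ s * (2 : ℝ) ^ (p * (s + 1) / s)) :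
    ∀ y, x₀ + B ≤ y → U y = 0 := by
  intro y hy
  have hx₀y : x₀ ≤ y := le_trans (by linarith) hy
  have hUy0 : 0 ≤ U y := hU0 y hx₀y
  set M := U x₀ with hM
  have hM0 : 0 ≤ M := hU0 x₀ le_rfl
  rcases eq_or_lt_of_le hM0 with hMeq | hMpos
  · have := hUmono x₀ y le_rfl hx₀y
    linarith
  · set q : ℝ := (2:ℝ) ^ (-(p/s)) with hq
    have hq0 : 0 < q := Real.rpow_pos_of_pos (by norm_num) _
    have hps : 0 < p / s := div_pos hp hs
    have hq1 : q < 1 := Real.rpow_lt_one_of_one_lt_of_neg (by norm_num) (by linarith)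
    have hLq : Real.log q = -(p/s) * Real.log 2 := by
      rw [hq]; exact Real.log_rpow (by norm_num) _
    have hBlog : p * Real.log B = Real.log C + s * Real.log M + (p * (s + 1) / s) * Real.log 2 := by
      have h1 : Real.log (B ^ p) = Real.log (C * M ^ s * (2:ℝ) ^ (p * (s + 1) / s)) := by
        rw [hBp]
      rw [Real.log_rpow hB, Real.log_mul (by positivity) (by positivity),
        Real.log_mul (by positivity) (by positivity), Real.log_rpow hMpos,
        Real.log_rpow (by norm_num : (0:ℝ) < 2)] at h1
      linarith
    -- key algebraic identity
    have key : ∀ n : ℕ, C * (M * q ^ n) ^ (1 + s) = (M * q ^ (n + 1)) * (B * (2:ℝ)⁻¹ ^ (n + 1)) ^ p := by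
      intro n
      have hMq : 0 < M * q ^ n := by positivity
      have hRHSpos : 0 < (M * q ^ (n + 1)) * (B * (2:ℝ)⁻¹ ^ (n + 1)) ^ p := by positivity
      have hLHSpos : 0 < C * (M * q ^ n) ^ (1 + s) := by positivity
      have hL1 : Real.log (C * (M * q ^ n) ^ (1 + s))
          = Real.log C + (1 + s) * (Real.log M + n * Real.log q) := by
        rw [Real.log_mul hC.ne' (by positivity), Real.log_rpow hMq,
          Real.log_mul hMpos.ne' (by positivity), Real.log_pow]
      have hL2 : Real.log ((M * q ^ (n + 1)) * (B * (2:ℝ)⁻¹ ^ (n + 1)) ^ p)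
          = (Real.log M + (n + 1) * Real.log q) + p * (Real.log B - (n + 1) * Real.log 2) := by
        rw [Real.log_mul (by positivity) (by positivity),
          Real.log_mul hMpos.ne' (by positivity), Real.log_pow,
          Real.log_rpow (show (0:ℝ) < B * (2:ℝ)⁻¹ ^ (n + 1) by positivity),
          Real.log_mul hB.ne' (by positivity), Real.log_pow, Real.log_inv]
        push_cast; ring
      apply Real.log_injOn_pos (Set.mem_Ioi.mpr hLHSpos) (Set.mem_Ioi.mpr hRHSpos)
      rw [hL1, hL2, hLq]
      have hs' : s ≠ 0 := hs.ne'
      field_simp at hBlog ⊢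
      linear_combination -hBlog
    -- the iteration
    have hmain : ∀ n : ℕ, U (x₀ + B - B * (2:ℝ)⁻¹ ^ n) ≤ M * q ^ n := by
      intro n
      induction n with
      | zero => simp; exact le_rfl
      | succ n ih =>
        set a := x₀ + B - B * (2:ℝ)⁻¹ ^ n with ha
        set b := x₀ + B - B * (2:ℝ)⁻¹ ^ (n + 1) with hb
        have hpow1 : ((2:ℝ)⁻¹) ^ n ≤ 1 := pow_le_one₀ (by norm_num) (by norm_num)
        have hpow2 : ((2:ℝ)⁻¹) ^ (n+1) ≤ ((2:ℝ)⁻¹) ^ n :=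
          pow_le_pow_of_le_one (by norm_num) (by norm_num) (Nat.le_succ n)
        have hpos : (0:ℝ) < ((2:ℝ)⁻¹) ^ (n+1) := by positivity
        have hx₀a : x₀ ≤ a := by
          rw [ha]; nlinarith
        have hab : a ≤ b := by
          rw [ha, hb]; nlinarith
        have hba : b - a = B * (2:ℝ)⁻¹ ^ (n + 1) := by
          rw [ha, hb, pow_succ]; ring
        have h1 := hrec a b hx₀a hab
        have hUa0 : 0 ≤ U a := hU0 a hx₀a
        have h2 : (U a) ^ (1 + s) ≤ (M * q ^ n) ^ (1 + s) :=
          Real.rpow_le_rpow hUa0 ih (by linarith)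
        have h3 : (b - a) ^ p * U b ≤ (M * q ^ (n + 1)) * (b - a) ^ p := by
          calc (b - a) ^ p * U b ≤ C * (U a) ^ (1 + s) := h1
            _ ≤ C * (M * q ^ n) ^ (1 + s) := by nlinarith
            _ = (M * q ^ (n + 1)) * (B * (2:ℝ)⁻¹ ^ (n + 1)) ^ p := key n
            _ = (M * q ^ (n + 1)) * (b - a) ^ p := by rw [hba]
        have hbap : 0 < (b - a) ^ p := by
          rw [hba]; exact Real.rpow_pos_of_pos (by positivity) _
        have h4 : (b - a) ^ p * U b ≤ (b - a) ^ p * (M * q ^ (n + 1)) := by linarith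
        exact le_of_mul_le_mul_left h4 hbap
    -- pass to the limit
    have hUyn : ∀ n : ℕ, U y ≤ M * q ^ n := by
      intro n
      refine le_trans ?_ (hmain n)
      have h5 : ((2:ℝ)⁻¹) ^ n ≤ 1 := pow_le_one₀ (by norm_num) (by norm_num)
      have h6 : (0:ℝ) ≤ ((2:ℝ)⁻¹) ^ n := by positivity
      have h7 : x₀ ≤ x₀ + B - B * (2:ℝ)⁻¹ ^ n := by nlinarith
      have h8 : x₀ + B - B * (2:ℝ)⁻¹ ^ n ≤ y := by nlinarith
      exact hUmono _ y h7 h8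
    have htend : Filter.Tendsto (fun n : ℕ => M * q ^ n) Filter.atTop (nhds 0) := by
      have := tendsto_pow_atTop_nhds_zero_of_lt_one hq0.le hq1
      simpa using this.const_mul M
    have : U y ≤ 0 := ge_of_tendsto' htend hUyn
    linarith
end

section
/- Let T > 0, let φ : [0,T] → ℝ be absolutely continuous with almost-everywhere derivative φ′ ∈ L¹(0,T) satisfying φ(b) − φ(a) = ∫_a^b φ′(s) ds for all 0 ≤ a ≤ b ≤ T, and let f ∈ L¹(0,T). Then for every h > 0 and every t ≥ 0 with t + h ≤ T, (1/h)∫_t^{t+h} φ(s) f(s) ds = φ(t+h) · f_h(t) + D_h φ(t) · ∫_0^t f(s) ds − (1/h)∫_t^{t+h} φ′(s) (∫_0^s f(r) dr) ds. -/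
/-! On `[t, t + h]` both `φ` and `F s = ∫₀ˢ f` are indefinite integrals of integrable functions,
hence absolutely continuous with a.e. derivatives `φ'` and `f`. The identity is integration by
parts `∫ φ F' = φ(t+h) F(t+h) - φ(t) F(t) - ∫ φ' F`, divided by `h` and rearranged with
`F(t+h) - F(t) = ∫_t^{t+h} f`. -/

open MeasureTheory intervalIntegral Set Filter Topology

theorem AbsolutelyContinuousOnInterval.congr {X : Type*} [PseudoMetricSpace X] {f g : ℝ → X}
    {a b : ℝ} (hf : AbsolutelyContinuousOnInterval f a b) (hfg : EqOn f g (uIcc a b)) :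
    AbsolutelyContinuousOnInterval g a b := by
  refine Tendsto.congr' ?_ hf
  filter_upwards [mem_inf_of_right (mem_principal_self _)] with E hE
  refine Finset.sum_congr rfl fun i hi => ?_
  rw [hfg (hE.1 i hi).1, hfg (hE.1 i hi).2]

section Primitive

variable {f f' g g' : ℝ → ℝ} {a b : ℝ}

theorem absolutelyContinuousOnInterval_of_sub_eq_integral
    (hf' : IntervalIntegrable f' volume a b) (hf : ∀ x ∈ uIcc a b, f x - f a = ∫ y in a..x, f' y) :
    AbsolutelyContinuousOnInterval f a b :=
  ((LipschitzWith.const (f a)).lipschitzOnWith.absolutelyContinuousOnInterval.fun_add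
    (hf'.absolutelyContinuousOnInterval_intervalIntegral left_mem_uIcc)).congr
    fun x hx => by simp only [← hf x hx]; ring

theorem ae_hasDerivAt_of_sub_eq_integral
    (hf' : IntervalIntegrable f' volume a b) (hf : ∀ x ∈ uIcc a b, f x - f a = ∫ y in a..x, f' y) :
    ∀ᵐ x, x ∈ uIcc a b → HasDerivAt f (f' x) x := by
  have hne_min : ∀ᵐ x : ℝ, x ≠ a ⊓ b := by simp [ae_iff, measure_singleton]
  have hne_max : ∀ᵐ x : ℝ, x ≠ a ⊔ b := by simp [ae_iff, measure_singleton]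
  filter_upwards [hf'.ae_hasDerivAt_integral, hne_min, hne_max] with x hderiv hmin hmax hx
  have hx_int : uIcc a b ∈ 𝓝 x :=
    Icc_mem_nhds (lt_of_le_of_ne hx.1 (Ne.symm hmin)) (lt_of_le_of_ne hx.2 hmax)
  refine ((hderiv hx a left_mem_uIcc).const_add (f a)).congr_of_eventuallyEq ?_
  filter_upwards [hx_int] with y hy
  rw [← hf y hy]; ring

theorem ae_deriv_eq_of_sub_eq_integral
    (hf' : IntervalIntegrable f' volume a b) (hf : ∀ x ∈ uIcc a b, f x - f a = ∫ y in a..x, f' y) :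
    ∀ᵐ x, x ∈ uIoc a b → deriv f x = f' x := by
  filter_upwards [ae_hasDerivAt_of_sub_eq_integral hf' hf] with x hx hx_mem
  exact (hx (uIoc_subset_uIcc hx_mem)).deriv

theorem integral_mul_eq_sub_sub_integral_of_sub_eq_integral
    (hf' : IntervalIntegrable f' volume a b) (hf : ∀ x ∈ uIcc a b, f x - f a = ∫ y in a..x, f' y)
    (hg' : IntervalIntegrable g' volume a b) (hg : ∀ x ∈ uIcc a b, g x - g a = ∫ y in a..x, g' y) :
    ∫ x in a..b, f x * g' x = f b * g b - f a * g a - ∫ x in a..b, f' x * g x := by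
  have hf_ac := absolutelyContinuousOnInterval_of_sub_eq_integral hf' hf
  have hg_ac := absolutelyContinuousOnInterval_of_sub_eq_integral hg' hg
  calc ∫ x in a..b, f x * g' x = ∫ x in a..b, f x * deriv g x :=
        integral_congr_ae <| by
          filter_upwards [ae_deriv_eq_of_sub_eq_integral hg' hg] with x hx hx_mem
          rw [hx hx_mem]
    _ = f b * g b - f a * g a - ∫ x in a..b, deriv f x * g x :=
        hf_ac.integral_mul_deriv_eq_deriv_mul hg_ac
    _ = f b * g b - f a * g a - ∫ x in a..b, f' x * g x := by
        congr 1
        refine integral_congr_ae ?_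
        filter_upwards [ae_deriv_eq_of_sub_eq_integral hf' hf] with x hx hx_mem
        rw [hx hx_mem]

end Primitive

theorem MeasureTheory.IntegrableOn.intervalIntegrable_of_mem_Icc {E : Type*} [NormedAddCommGroup E]
    {f : ℝ → E} {μ : Measure ℝ} {a b c d : ℝ} (hf : IntegrableOn f (Ioc c d) μ)
    (ha : a ∈ Icc c d) (hb : b ∈ Icc c d) : IntervalIntegrable f μ a b :=
  intervalIntegrable_iff.2 <| hf.mono_set <|
    Ioc_subset_Ioc (le_min ha.1 hb.1) (max_le ha.2 hb.2)

theorem steklov_ibp_identity_general (T : ℝ) (φ φ' f : ℝ → ℝ)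
    (hφ'int : IntegrableOn φ' (Set.Ioc 0 T))
    (hFTC : ∀ a b : ℝ, 0 ≤ a → a ≤ b → b ≤ T → φ b - φ a = ∫ s in a..b, φ' s)
    (hfint : IntegrableOn f (Set.Ioc 0 T))
    (h t : ℝ) (hh : 0 < h) (ht : 0 ≤ t) (hth : t + h ≤ T) :
    (1 / h) * ∫ s in t..(t + h), φ s * f s
      = φ (t + h) * ((1 / h) * ∫ s in t..(t + h), f s)
        + ((φ (t + h) - φ t) / h) * (∫ s in (0 : ℝ)..t, f s)
        - (1 / h) * ∫ s in t..(t + h), φ' s * (∫ r in (0 : ℝ)..s, f r) := by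
  set F : ℝ → ℝ := fun s => ∫ r in (0 : ℝ)..s, f r
  have htb : t ≤ t + h := by linarith
  have hzero : (0 : ℝ) ∈ Icc 0 T := ⟨le_rfl, by linarith⟩
  have hsub : uIcc t (t + h) ⊆ Icc 0 T := uIcc_of_le htb ▸ Icc_subset_Icc ht hth
  have hφ : ∀ x ∈ uIcc t (t + h), φ x - φ t = ∫ s in t..x, φ' s := fun x hx =>
    hFTC t x ht (uIcc_of_le htb ▸ hx).1 (hsub hx).2
  have hF : ∀ x ∈ uIcc t (t + h), F x - F t = ∫ s in t..x, f s := fun x hx =>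
    integral_interval_sub_left (hfint.intervalIntegrable_of_mem_Icc hzero (hsub hx))
      (hfint.intervalIntegrable_of_mem_Icc hzero (hsub left_mem_uIcc))
  have hibp := integral_mul_eq_sub_sub_integral_of_sub_eq_integral
    (hφ'int.intervalIntegrable_of_mem_Icc (hsub left_mem_uIcc) (hsub right_mem_uIcc)) hφ
    (hfint.intervalIntegrable_of_mem_Icc (hsub left_mem_uIcc) (hsub right_mem_uIcc)) hF
  rw [hibp, ← hF (t + h) right_mem_uIcc]
  ring

/-- The basic Steklov-averaging integration-by-parts identity (Lemma 4.1 of the paper):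
for an absolutely continuous `φ` (with a.e. derivative `φ'` satisfying the fundamental
theorem of calculus on `[0,T]`) and `f ∈ L¹(0,T)`, for every `h > 0` and `t ≥ 0` with
`t + h ≤ T`,
`(1/h) ∫_t^{t+h} φ f = φ(t+h) f_h(t) + D_h φ(t) ∫_0^t f - (1/h) ∫_t^{t+h} φ'(s) ∫_0^s f`. -/
theorem steklov_ibp_identity (T : ℝ) (hT : 0 < T) (φ φ' f : ℝ → ℝ)
    (hφ'int : IntegrableOn φ' (Set.Ioc 0 T))
    (hFTC : ∀ a b : ℝ, 0 ≤ a → a ≤ b → b ≤ T → φ b - φ a = ∫ s in a..b, φ' s)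
    (hfint : IntegrableOn f (Set.Ioc 0 T))
    (h t : ℝ) (hh : 0 < h) (ht : 0 ≤ t) (hth : t + h ≤ T) :
    (1 / h) * ∫ s in t..(t + h), φ s * f s
      = φ (t + h) * ((1 / h) * ∫ s in t..(t + h), f s)
        + ((φ (t + h) - φ t) / h) * (∫ s in (0 : ℝ)..t, f s)
        - (1 / h) * ∫ s in t..(t + h), φ' s * (∫ r in (0 : ℝ)..s, f r) :=
  steklov_ibp_identity_general T φ φ' f hφ'int hFTC hfint h t hh ht hth
end

section
/- Let (Ω, μ) be a σ-finite measure space and T > 0. Let ψ ∈ L²(μ), let F : [0,T] × Ω → ℝ be measurable with F ∈ L²((0,T) × Ω) (product of Lebesgue measure and μ), and let n : [0,T] × Ω → ℝ be measurable and bounded such that for μ-a.e. x the map s ↦ n(s,x) is absolutely continuous with a.e. derivative ∂_s n(s,x), and ∂_s n is bounded on [0,T] × Ω. Then for every h > 0 and a.e. t with t + h ≤ T, (1/h)∫_Ω ∫_t^{t+h} n(s,x) F(s,x) ψ(x) ds dμ(x) = ∫_Ω n(t+h,x) F_h(t,x) ψ(x) dμ(x) + ∫_Ω ψ(x) [ ((n(t+h,x)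 − n(t,x))/h) ∫_0^t F(s,x) ds − (1/h)∫_t^{t+h} ∂_s n(s,x) (∫_0^s F(r,x) dr) ds ] dμ(x). -/
/-!
For a.e. `x`, both `s ↦ n s x` and the primitive `G s = ∫ r in 0..s, F r x` are absolutely
continuous, with a.e. derivatives `n' · x` and `F · x`. Integration by parts on `[t, t + h]`
gives `∫ n F = n (t + h) G (t + h) - n t G t - ∫ n' G`, which is the bracketed identity once
`G (t + h) = G t + ∫ s in t..t + h, F s x`. Multiplying by `ψ` and integrating over `Ω` is
legitimate because every term is dominated by a multiple of `|ψ x| * ∫ s in Ioc 0 T, |F s x|`,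
which is integrable by Cauchy–Schwarz on the product space. The identity in fact holds for
every admissible `t`.
-/

open MeasureTheory intervalIntegral

open Set Function

section Primitive

variable {f g N G : ℝ → ℝ} {a b : ℝ}

theorem IntervalIntegrable.absolutelyContinuousOnInterval_const_add_integral
    (hf : IntervalIntegrable f volume a b) (c : ℝ) :
    AbsolutelyContinuousOnInterval (fun x => c + ∫ y in a..x, f y) a b :=
  (LipschitzWith.const c).lipschitzOnWith.absolutelyContinuousOnInterval.fun_add
    (hf.absolutelyContinuousOnInterval_intervalIntegral left_mem_uIcc)

theorem IntervalIntegrable.ae_deriv_const_add_integral (hf : IntervalIntegrable f volume a b)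
    (c : ℝ) : ∀ᵐ x, x ∈ uIoc a b → deriv (fun x => c + ∫ y in a..x, f y) x = f x := by
  filter_upwards [hf.ae_hasDerivAt_integral] with x hx hxab
  exact ((hx (uIoc_subset_uIcc hxab) a left_mem_uIcc).const_add c).deriv

theorem integral_mul_eq_sub_of_eq_add_integral (hf : IntervalIntegrable f volume a b)
    (hg : IntervalIntegrable g volume a b)
    (hN : ∀ x ∈ uIcc a b, N x = N a + ∫ y in a..x, g y)
    (hG : ∀ x ∈ uIcc a b, G x = G a + ∫ y in a..x, f y) :
    ∫ x in a..b, N x * f x = N b * G b - N a * G a - ∫ x in a..b, g x * G x := by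
  have hibp := (hg.absolutelyContinuousOnInterval_const_add_integral (N a)
    ).integral_mul_deriv_eq_deriv_mul (hf.absolutelyContinuousOnInterval_const_add_integral (G a))
  have hNG : ∀ x ∈ uIoc a b,
      N x = N a + ∫ y in a..x, g y ∧ G x = G a + ∫ y in a..x, f y :=
    fun x hx => ⟨hN x (uIoc_subset_uIcc hx), hG x (uIoc_subset_uIcc hx)⟩
  rw [hN b right_mem_uIcc, hG b right_mem_uIcc]
  convert hibp using 1
  · refine integral_congr_ae ?_
    filter_upwards [hf.ae_deriv_const_add_integral (G a)] with x hf' hx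
    rw [hf' hx, (hNG x hx).1]
  · congr 1
    · simp
    · refine integral_congr_ae ?_
      filter_upwards [hg.ae_deriv_const_add_integral (N a)] with x hg' hx
      rw [hg' hx, (hNG x hx).2]

theorem integral_mul_eq_mul_integral_add_sub (ha : 0 ≤ a) (hab : a ≤ b)
    (hf : IntervalIntegrable f volume 0 b) (hg : IntervalIntegrable g volume a b)
    (hN : ∀ x ∈ uIcc a b, N x = N a + ∫ y in a..x, g y) :
    ∫ x in a..b, N x * f x
      = N b * (∫ x in a..b, f x) + (N b - N a) * (∫ x in (0 : ℝ)..a, f x)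
        - ∫ x in a..b, g x * ∫ y in (0 : ℝ)..x, f y := by
  have ha_mem : a ∈ uIcc 0 b := by rw [uIcc_of_le (ha.trans hab)]; exact ⟨ha, hab⟩
  have hfa : IntervalIntegrable f volume 0 a := hf.mono_set (uIcc_subset_uIcc_left ha_mem)
  have hfab : IntervalIntegrable f volume a b := hf.mono_set (uIcc_subset_uIcc_right ha_mem)
  have hG : ∀ x ∈ uIcc a b, ∫ y in (0 : ℝ)..x, f y
      = (∫ y in (0 : ℝ)..a, f y) + ∫ y in a..x, f y := fun x hx =>
    (integral_add_adjacent_intervals hfa (hfab.mono_set (uIcc_subset_uIcc_left hx))).symm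
  rw [integral_mul_eq_sub_of_eq_add_integral hfab hg hN hG, ← integral_interval_sub_left hf hfa]
  ring

theorem integral_mul_eq_mul_integral_add_sub_of_integrableOn {T M : ℝ}
    (hf : IntegrableOn f (Ioc 0 T)) (hgm : Measurable g) (hg : ∀ s, |g s| ≤ M)
    (hN : ∀ a b : ℝ, 0 ≤ a → a ≤ b → b ≤ T → N b - N a = ∫ s in a..b, g s)
    (ha : 0 ≤ a) (hab : a ≤ b) (hbT : b ≤ T) :
    ∫ x in a..b, N x * f x
      = N b * (∫ x in a..b, f x) + (N b - N a) * (∫ x in (0 : ℝ)..a, f x)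
        - ∫ x in a..b, g x * ∫ y in (0 : ℝ)..x, f y := by
  refine integral_mul_eq_mul_integral_add_sub ha hab
    ((intervalIntegrable_iff_integrableOn_Ioc_of_le (ha.trans hab)).2
      (hf.mono_set (Ioc_subset_Ioc le_rfl hbT)))
    ((intervalIntegrable_const (c := M)).mono_fun' hgm.aestronglyMeasurable (ae_of_all _ hg))
    fun x hx => ?_
  rw [uIcc_of_le hab] at hx
  linarith [hN a x ha hx.1 (hx.2.trans hbT)]

end Primitive

theorem abs_intervalIntegral_le_setIntegral_abs {f : ℝ → ℝ} {a b c d : ℝ}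
    (hf : IntegrableOn f (Ioc c d)) (hca : c ≤ a) (hab : a ≤ b) (hbd : b ≤ d) :
    |∫ x in a..b, f x| ≤ ∫ x in Ioc c d, |f x| := by
  rw [integral_of_le hab]
  exact MeasureTheory.abs_integral_le_integral_abs.trans
    (setIntegral_mono_set hf.abs (Filter.Eventually.of_forall fun _ => abs_nonneg _)
      (Ioc_subset_Ioc hca hbd).eventuallyLE)

theorem abs_integral_mul_primitive_le {f g : ℝ → ℝ} {a b T M : ℝ}
    (hf : IntegrableOn f (Ioc 0 T)) (hg : ∀ s, |g s| ≤ M) (ha : 0 ≤ a) (hab : a ≤ b)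
    (hbT : b ≤ T) :
    |∫ s in a..b, g s * ∫ r in (0 : ℝ)..s, f r|
      ≤ M * (b - a) * ∫ r in Ioc 0 T, |f r| := by
  have hM : 0 ≤ M := (abs_nonneg _).trans (hg 0)
  have hbound : ∀ s ∈ uIoc a b,
      ‖g s * ∫ r in (0 : ℝ)..s, f r‖ ≤ M * ∫ r in Ioc 0 T, |f r| := by
    intro s hs
    rw [uIoc_of_le hab] at hs
    rw [Real.norm_eq_abs, abs_mul]
    exact mul_le_mul (hg s) (abs_intervalIntegral_le_setIntegral_abs hf le_rfl
      (ha.trans hs.1.le) (hs.2.trans hbT)) (abs_nonneg _) hM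
  calc |∫ s in a..b, g s * ∫ r in (0 : ℝ)..s, f r|
      ≤ (M * ∫ r in Ioc 0 T, |f r|) * |b - a| := norm_integral_le_of_norm_le_const hbound
    _ = M * (b - a) * ∫ r in Ioc 0 T, |f r| := by
      rw [abs_of_nonneg (sub_nonneg.2 hab)]
      ring

section Product

variable {α Ω : Type*} [MeasurableSpace α] [MeasurableSpace Ω] {ν : Measure α}
  {μ : Measure Ω} [IsFiniteMeasure ν] [SFinite μ] {F : α → Ω → ℝ}

theorem ae_integrable_of_memLp_two_prod (hFm : Measurable (uncurry F))
    (hF : MemLp (fun p : α × Ω => F p.1 p.2) 2 (ν.prod μ)) :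
    ∀ᵐ x ∂μ, Integrable (fun s => F s x) ν := by
  filter_upwards [(hF.integrable_mul hF).prod_left_ae] with x hx
  have hmeas : AEStronglyMeasurable (fun s => F s x) ν :=
    (hFm.comp measurable_prodMk_right).aestronglyMeasurable
  exact ((memLp_two_iff_integrable_sq hmeas).2 (by simpa [sq] using hx)).integrable one_le_two

theorem integrable_integral_abs_mul_abs {ψ : Ω → ℝ}
    (hF : MemLp (fun p : α × Ω => F p.1 p.2) 2 (ν.prod μ)) (hψ : MemLp ψ 2 μ) :
    Integrable (fun x => (∫ s, |F s x| ∂ν) * |ψ x|) μ := by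
  refine (hF.integrable_mul (hψ.comp_snd ν)).integral_norm_prod_right.congr
    (Filter.Eventually.of_forall fun x => ?_)
  simp only [Pi.mul_apply, Real.norm_eq_abs, abs_mul, MeasureTheory.integral_mul_const]

end Product

theorem MeasureTheory.Integrable.mul_of_abs_le_mul {Ω : Type*} [MeasurableSpace Ω]
    {μ : Measure Ω} {ψ g D : Ω → ℝ} {K : ℝ} (hD : Integrable (fun x => D x * |ψ x|) μ)
    (hψ : AEStronglyMeasurable ψ μ) (hg : AEStronglyMeasurable g μ)
    (hbd : ∀ᵐ x ∂μ, |g x| ≤ K * D x) : Integrable (fun x => ψ x * g x) μ := by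
  refine (hD.const_mul K).mono' (hψ.mul hg) ?_
  filter_upwards [hbd] with x hx
  rw [Real.norm_eq_abs, abs_mul, mul_comm (D x), mul_left_comm]
  exact mul_le_mul_of_nonneg_left hx (abs_nonneg _)

section Parametric

variable {Ω : Type*} [MeasurableSpace Ω] {F : ℝ → Ω → ℝ}

theorem measurable_intervalIntegral_uncurry (hF : Measurable (uncurry F)) (a : ℝ) :
    Measurable fun p : ℝ × Ω => ∫ r in a..p.1, F r p.2 := by
  have hIoc : ∀ l u : ℝ × Ω → ℝ, Measurable l → Measurable u →
      Measurable fun p : ℝ × Ω => ∫ r in Ioc (l p) (u p), F r p.2 := by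
    intro l u hl hu
    simp_rw [← MeasureTheory.integral_indicator measurableSet_Ioc]
    refine (StronglyMeasurable.integral_prod_right
      (f := fun p r => (Ioc (l p) (u p)).indicator (F · p.2) r) ?_).measurable
    have hS : MeasurableSet {q : (ℝ × Ω) × ℝ | l q.1 < q.2 ∧ q.2 ≤ u q.1} :=
      (measurableSet_lt (hl.comp measurable_fst) measurable_snd).inter
        (measurableSet_le measurable_snd (hu.comp measurable_fst))
    exact ((hF.comp (measurable_snd.prodMk (measurable_snd.comp measurable_fst))).indicator
      hS).stronglyMeasurable
  exact (hIoc _ _ measurable_const measurable_fst).sub (hIoc _ _ measurable_fst measurable_const)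

theorem measurable_intervalIntegral_of_uncurry (hF : Measurable (uncurry F)) (a b : ℝ) :
    Measurable fun x => ∫ s in a..b, F s x :=
  (measurable_intervalIntegral_uncurry hF a).comp (measurable_const.prodMk measurable_id)

variable {μ : Measure Ω} [SFinite μ] {T a b : ℝ} {ψ : Ω → ℝ}

theorem integrable_mul_intervalIntegral (hψ : MemLp ψ 2 μ) (hFm : Measurable (uncurry F))
    (hF : MemLp (fun p : ℝ × Ω => F p.1 p.2) 2 ((volume.restrict (Ioc 0 T)).prod μ))
    (ha : 0 ≤ a) (hab : a ≤ b) (hbT : b ≤ T) :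
    Integrable (fun x => ψ x * ∫ s in a..b, F s x) μ := by
  refine (integrable_integral_abs_mul_abs hF hψ).mul_of_abs_le_mul (K := 1) hψ.1
    (measurable_intervalIntegral_of_uncurry hFm a b).aestronglyMeasurable ?_
  filter_upwards [ae_integrable_of_memLp_two_prod hFm hF] with x hx
  rw [one_mul]
  exact abs_intervalIntegral_le_setIntegral_abs hx ha hab hbT

theorem integrable_mul_integral_mul_primitive (hψ : MemLp ψ 2 μ) (hFm : Measurable (uncurry F))
    (hF : MemLp (fun p : ℝ × Ω => F p.1 p.2) 2 ((volume.restrict (Ioc 0 T)).prod μ))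
    {g : ℝ → Ω → ℝ} (hgm : Measurable (uncurry g)) {M : ℝ} (hg : ∀ s x, |g s x| ≤ M)
    (ha : 0 ≤ a) (hab : a ≤ b) (hbT : b ≤ T) :
    Integrable (fun x => ψ x * ∫ s in a..b, g s x * ∫ r in (0 : ℝ)..s, F r x) μ := by
  refine (integrable_integral_abs_mul_abs hF hψ).mul_of_abs_le_mul (K := M * (b - a)) hψ.1
    (measurable_intervalIntegral_of_uncurry
      (hgm.mul (measurable_intervalIntegral_uncurry hFm 0)) a b).aestronglyMeasurable ?_
  filter_upwards [ae_integrable_of_memLp_two_prod hFm hF] with x hx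
  exact abs_integral_mul_primitive_le hx (hg · x) ha hab hbT

end Parametric

theorem steklov_ibp_measure_general (Ω : Type*) [MeasurableSpace Ω] (μ : Measure Ω) [SigmaFinite μ]
    (T : ℝ)
    (ψ : Ω → ℝ) (hψ : MemLp ψ 2 μ)
    (F : ℝ → Ω → ℝ) (hFmeas : Measurable (Function.uncurry F))
    (hF : MemLp (fun p : ℝ × Ω => F p.1 p.2) 2 ((volume.restrict (Set.Ioc 0 T)).prod μ))
    (n n' : ℝ → Ω → ℝ)
    (hnmeas : Measurable (Function.uncurry n))
    (hn'meas : Measurable (Function.uncurry n'))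
    (M : ℝ) (hnbd : ∀ s x, |n s x| ≤ M) (hn'bd : ∀ s x, |n' s x| ≤ M)
    (hFTC : ∀ᵐ x ∂μ, ∀ a b : ℝ, 0 ≤ a → a ≤ b → b ≤ T →
      n b x - n a x = ∫ s in a..b, n' s x)
    (h : ℝ) (hh : 0 < h) :
    ∀ᵐ t : ℝ, 0 ≤ t → t + h ≤ T →
      (1 / h) * ∫ x, (∫ s in t..(t + h), n s x * F s x * ψ x) ∂μ
        = (∫ x, n (t + h) x * ((1 / h) * ∫ s in t..(t + h), F s x) * ψ x ∂μ)
          + ∫ x, ψ x * (((n (t + h) x - n t x) / h) * (∫ s in (0 : ℝ)..t, F s x)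
              - (1 / h) * ∫ s in t..(t + h), n' s x * (∫ r in (0 : ℝ)..s, F r x)) ∂μ := by
  refine Filter.Eventually.of_forall fun t ht htT => ?_
  have htt : t ≤ t + h := by linarith
  have hn : ∀ s, Measurable fun x => n s x := fun s => hnmeas.comp measurable_prodMk_left
  have hA := (integrable_mul_intervalIntegral hψ hFmeas hF ht htt htT).bdd_mul
    (hn (t + h)).aestronglyMeasurable (ae_of_all _ fun x => hnbd _ x)
  have hB := (integrable_mul_intervalIntegral hψ hFmeas hF le_rfl ht (htt.trans htT)).bdd_mul
    ((hn (t + h)).sub (hn t)).aestronglyMeasurable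
    (ae_of_all _ fun x => (abs_sub _ _).trans (add_le_add (hnbd (t + h) x) (hnbd t x)))
  have hC := integrable_mul_integral_mul_primitive hψ hFmeas hF hn'meas hn'bd ht htt htT
  rw [← MeasureTheory.integral_const_mul, ← MeasureTheory.integral_add]
  · refine integral_congr_ae ?_
    filter_upwards [ae_integrable_of_memLp_two_prod hFmeas hF, hFTC] with x hF_x hn_x
    rw [intervalIntegral.integral_mul_const,
      integral_mul_eq_mul_integral_add_sub_of_integrableOn hF_x (g := (n' · x))
        (hn'meas.comp measurable_prodMk_right) (hn'bd · x) hn_x ht htt htT]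
    ring
  · exact (hA.const_mul (1 / h)).congr (ae_of_all _ fun x => by ring)
  · exact ((hB.sub hC).const_mul (1 / h)).congr
      (ae_of_all _ fun x => by simp only [Pi.sub_apply]; ring)

/-- Componentwise (scalar-coefficient) form of Corollary 4.2 of the paper: the Steklov
average of `s ↦ n(s,x) F(s,x)` against `ψ` equals the average coefficient term plus the
commutator correction, for a.e. `t` with `0 ≤ t` and `t + h ≤ T`. -/
theorem steklov_ibp_measure (Ω : Type*) [MeasurableSpace Ω] (μ : Measure Ω) [SigmaFinite μ]
    (T : ℝ) (hT : 0 < T)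
    (ψ : Ω → ℝ) (hψ : MemLp ψ 2 μ)
    (F : ℝ → Ω → ℝ) (hFmeas : Measurable (Function.uncurry F))
    (hF : MemLp (fun p : ℝ × Ω => F p.1 p.2) 2 ((volume.restrict (Set.Ioc 0 T)).prod μ))
    (n n' : ℝ → Ω → ℝ)
    (hnmeas : Measurable (Function.uncurry n))
    (hn'meas : Measurable (Function.uncurry n'))
    (M : ℝ) (hnbd : ∀ s x, |n s x| ≤ M) (hn'bd : ∀ s x, |n' s x| ≤ M)
    (hFTC : ∀ᵐ x ∂μ, ∀ a b : ℝ, 0 ≤ a → a ≤ b → b ≤ T →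
      n b x - n a x = ∫ s in a..b, n' s x)
    (h : ℝ) (hh : 0 < h) :
    ∀ᵐ t : ℝ, 0 ≤ t → t + h ≤ T →
      (1 / h) * ∫ x, (∫ s in t..(t + h), n s x * F s x * ψ x) ∂μ
        = (∫ x, n (t + h) x * ((1 / h) * ∫ s in t..(t + h), F s x) * ψ x ∂μ)
          + ∫ x, ψ x * (((n (t + h) x - n t x) / h) * (∫ s in (0 : ℝ)..t, F s x)
              - (1 / h) * ∫ s in t..(t + h), n' s x * (∫ r in (0 : ℝ)..s, F r x)) ∂μ :=
  steklov_ibp_measure_general Ω μ T ψ hψ F hFmeas hF n n' hnmeas hn'meas M hnbd hn'bd hFTC h hh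
end

section
/- Let ω, γ > 0 and let U_∞, W_∞, Z_∞ > 0 be constants satisfying Z_∞ = U_∞ W_∞. Then there exists a constant C > 0, depending only on ω, γ, U_∞, W_∞, Z_∞, such that for all real numbers a, b, c ≥ 0 satisfying ω a² + γ c² = ω U_∞² + γ Z_∞² and b² + c² = W_∞² + Z_∞², one has (a − U_∞)² + (b − W_∞)² + (c − Z_∞)² ≤ C (ab − c)². -/
/-!
Put `t = Z∞² - c²`; the constraints give `a² - U∞² = (γ/ω) t` and `b² - W∞² = t`, and
`(x - y)² ≤ (x² - y²)² / y²` for `x ≥ 0 < y` bounds the left-hand side by a multiple of `t²`.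
Since `Z∞ = U∞ W∞`, also `ω (a²b² - Z∞²) = t (ω U∞² + γ b²)`, so `ab - Z∞` and `Z∞ - c` have the
same sign and `(Z∞ - c)² ≤ (ab - c)²`; as `c² ≤ W∞² + Z∞²`, this gives
`t² = (Z∞ + c)² (Z∞ - c)² ≤ (4 Z∞² + 2 W∞²) (ab - c)²`.
-/

section OrderedField

variable {α : Type*} [Field α] [LinearOrder α] [IsStrictOrderedRing α]

theorem sq_sub_le_sq_sub_sq_div_sq {x y : α} (hx : 0 ≤ x) (hy : 0 < y) :
    (x - y) ^ 2 ≤ (x ^ 2 - y ^ 2) ^ 2 / y ^ 2 := by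
  rw [le_div_iff₀ (by positivity)]
  calc (x - y) ^ 2 * y ^ 2 ≤ (x - y) ^ 2 * (x + y) ^ 2 := by gcongr; linarith
    _ = (x ^ 2 - y ^ 2) ^ 2 := by ring

theorem sq_le_sq_add_of_mul_nonneg {p q : α} (h : 0 ≤ p * q) : q ^ 2 ≤ (p + q) ^ 2 := by
  nlinarith [sq_nonneg p]

end OrderedField

section Equilibrium

variable {ω γ U W a b c : ℝ}

theorem mul_sq_sub_sq_eq_of_conservation
    (ha : ω * a ^ 2 + γ * c ^ 2 = ω * U ^ 2 + γ * (U * W) ^ 2)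
    (hb : b ^ 2 + c ^ 2 = W ^ 2 + (U * W) ^ 2) :
    ω * ((a * b) ^ 2 - (U * W) ^ 2) = ((U * W) ^ 2 - c ^ 2) * (ω * U ^ 2 + γ * b ^ 2) := by
  linear_combination b ^ 2 * ha + ω * U ^ 2 * hb

theorem sq_sub_le_sq_sub_of_conservation (hω : 0 < ω) (hγ : 0 < γ) (hU : 0 < U) (hW : 0 < W)
    (ha0 : 0 ≤ a) (hb0 : 0 ≤ b) (hc0 : 0 ≤ c)
    (ha : ω * a ^ 2 + γ * c ^ 2 = ω * U ^ 2 + γ * (U * W) ^ 2)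
    (hb : b ^ 2 + c ^ 2 = W ^ 2 + (U * W) ^ 2) :
    (U * W - c) ^ 2 ≤ (a * b - c) ^ 2 := by
  -- multiplied by the positive `ω (ab + UW)(UW + c)`, the product below becomes `(U²W² - c²)² (ωU² + γb²)`
  have hsign : 0 ≤ (a * b - U * W) * (U * W - c) := by
    have hpos : 0 < ω * (a * b + U * W) * (U * W + c) := by positivity
    refine (mul_nonneg_iff_of_pos_left hpos).1 ?_
    have key := mul_sq_sub_sq_eq_of_conservation ha hb
    calc 0 ≤ ((U * W) ^ 2 - c ^ 2) ^ 2 * (ω * U ^ 2 + γ * b ^ 2) := by positivity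
      _ = ω * (a * b + U * W) * (U * W + c) * ((a * b - U * W) * (U * W - c)) := by
        linear_combination (c ^ 2 - (U * W) ^ 2) * key
  calc (U * W - c) ^ 2 ≤ (a * b - U * W + (U * W - c)) ^ 2 := sq_le_sq_add_of_mul_nonneg hsign
    _ = (a * b - c) ^ 2 := by ring

theorem sq_sq_sub_sq_le_of_conservation (hω : 0 < ω) (hγ : 0 < γ) (hU : 0 < U) (hW : 0 < W)
    (ha0 : 0 ≤ a) (hb0 : 0 ≤ b) (hc0 : 0 ≤ c)
    (ha : ω * a ^ 2 + γ * c ^ 2 = ω * U ^ 2 + γ * (U * W) ^ 2)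
    (hb : b ^ 2 + c ^ 2 = W ^ 2 + (U * W) ^ 2) :
    ((U * W) ^ 2 - c ^ 2) ^ 2 ≤ (4 * (U * W) ^ 2 + 2 * W ^ 2) * (a * b - c) ^ 2 := by
  have hc : (U * W + c) ^ 2 ≤ 4 * (U * W) ^ 2 + 2 * W ^ 2 := by
    nlinarith [sq_nonneg b, sq_nonneg (U * W - c)]
  calc ((U * W) ^ 2 - c ^ 2) ^ 2 = (U * W + c) ^ 2 * (U * W - c) ^ 2 := by ring
    _ ≤ (4 * (U * W) ^ 2 + 2 * W ^ 2) * (a * b - c) ^ 2 :=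
      mul_le_mul hc (sq_sub_le_sq_sub_of_conservation hω hγ hU hW ha0 hb0 hc0 ha hb) (sq_nonneg _)
        (by positivity)

end Equilibrium

theorem equilibrium_constants_bound_general (ω γ Usq Wsq Zsq : ℝ)
    (hω : 0 < ω) (hγ : 0 < γ)
    (hU : 0 < Usq) (hW : 0 < Wsq) (hZUW : Zsq = Usq * Wsq) :
    ∃ C > 0, ∀ a b c : ℝ, 0 ≤ a → 0 ≤ b → 0 ≤ c →
      ω * a ^ 2 + γ * c ^ 2 = ω * Usq ^ 2 + γ * Zsq ^ 2 →
      b ^ 2 + c ^ 2 = Wsq ^ 2 + Zsq ^ 2 →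
      (a - Usq) ^ 2 + (b - Wsq) ^ 2 + (c - Zsq) ^ 2 ≤ C * (a * b - c) ^ 2 := by
  subst hZUW
  set K := γ ^ 2 / (ω ^ 2 * Usq ^ 2) + 1 / Wsq ^ 2 + 1 / (Usq * Wsq) ^ 2
  refine ⟨K * (4 * (Usq * Wsq) ^ 2 + 2 * Wsq ^ 2), by positivity, ?_⟩
  intro a b c ha0 hb0 hc0 ha hb
  set t := (Usq * Wsq) ^ 2 - c ^ 2
  have hta : (a - Usq) ^ 2 ≤ γ ^ 2 / (ω ^ 2 * Usq ^ 2) * t ^ 2 := by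
    have ht : a ^ 2 - Usq ^ 2 = γ / ω * t := by field_simp; linear_combination ha
    calc (a - Usq) ^ 2 ≤ (a ^ 2 - Usq ^ 2) ^ 2 / Usq ^ 2 := sq_sub_le_sq_sub_sq_div_sq ha0 hU
      _ = _ := by rw [ht]; field_simp
  have htb : (b - Wsq) ^ 2 ≤ 1 / Wsq ^ 2 * t ^ 2 := by
    have ht : b ^ 2 - Wsq ^ 2 = t := by linear_combination hb
    calc (b - Wsq) ^ 2 ≤ (b ^ 2 - Wsq ^ 2) ^ 2 / Wsq ^ 2 := sq_sub_le_sq_sub_sq_div_sq hb0 hW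
      _ = _ := by rw [ht]; ring
  have htc : (c - Usq * Wsq) ^ 2 ≤ 1 / (Usq * Wsq) ^ 2 * t ^ 2 := by
    calc (c - Usq * Wsq) ^ 2 ≤ (c ^ 2 - (Usq * Wsq) ^ 2) ^ 2 / (Usq * Wsq) ^ 2 :=
          sq_sub_le_sq_sub_sq_div_sq hc0 (by positivity)
      _ = _ := by ring
  calc (a - Usq) ^ 2 + (b - Wsq) ^ 2 + (c - Usq * Wsq) ^ 2 ≤ K * t ^ 2 := by linarith
    _ ≤ K * ((4 * (Usq * Wsq) ^ 2 + 2 * Wsq ^ 2) * (a * b - c) ^ 2) := by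
      gcongr
      exact sq_sq_sub_sq_le_of_conservation hω hγ hU hW ha0 hb0 hc0 ha hb
    _ = _ := by ring

/-- Lemma 5.2 of the paper: quadratic control of the distance of `(a,b,c)` to the
equilibrium square roots `(Usq, Wsq, Zsq)` (with `Zsq = Usq * Wsq`) by `(ab - c)²`,
under the two conservation-law constraints. -/
theorem equilibrium_constants_bound (ω γ Usq Wsq Zsq : ℝ)
    (hω : 0 < ω) (hγ : 0 < γ)
    (hU : 0 < Usq) (hW : 0 < Wsq) (hZ : 0 < Zsq) (hZUW : Zsq = Usq * Wsq) :
    ∃ C > 0, ∀ a b c : ℝ, 0 ≤ a → 0 ≤ b → 0 ≤ c →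
      ω * a ^ 2 + γ * c ^ 2 = ω * Usq ^ 2 + γ * Zsq ^ 2 →
      b ^ 2 + c ^ 2 = Wsq ^ 2 + Zsq ^ 2 →
      (a - Usq) ^ 2 + (b - Wsq) ^ 2 + (c - Zsq) ^ 2 ≤ C * (a * b - c) ^ 2 :=
  equilibrium_constants_bound_general ω γ Usq Wsq Zsq hω hγ hU hW hZUW
end

section
/- Let ω, γ, M₁, M₂ > 0. Then there exists a unique triple (u_∞, w_∞, z_∞) of nonnegative real numbers satisfying the system ω u_∞ + γ z_∞ = M₁, γ (w_∞ + z_∞) = M₂, and u_∞ w_∞ = z_∞; moreover each of u_∞, w_∞, z_∞ is strictly positive. -/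
/-!
Eliminating `w` and `z` through the two linear conservation laws turns the product law
`u w = z` into the quadratic `ω u² + (M₂ - M₁ + ω) u = M₁`. Its constant term `-M₁` is negative,
so it has exactly one positive root, and every nonnegative solution has `u > 0`, since `u = 0`
would force `z = 0` and hence `M₁ = 0`.
-/

theorem exists_pos_quadratic_root {a c : ℝ} (b : ℝ) (ha : 0 < a) (hc : 0 < c) :
    ∃ x, 0 < x ∧ a * x ^ 2 + b * x = c := by
  have hdisc : 0 ≤ b ^ 2 + 4 * a * c := by positivity
  set s := √(b ^ 2 + 4 * a * c)
  have hs_sq : s ^ 2 = b ^ 2 + 4 * a * c := Real.sq_sqrt hdisc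
  have hb_lt : b < s := by nlinarith [Real.sqrt_nonneg (b ^ 2 + 4 * a * c), mul_pos ha hc]
  refine ⟨(s - b) / (2 * a), div_pos (by linarith) (by positivity), ?_⟩
  field_simp
  linear_combination hs_sq

-- On `x > 0` the root equation reads `a x + b = c / x > 0`, which makes the second factor below
-- positive.
theorem eq_of_pos_quadratic_roots {a b c x y : ℝ} (ha : 0 ≤ a) (hc : 0 < c)
    (hx : 0 < x) (hy : 0 < y) (hxc : a * x ^ 2 + b * x = c) (hyc : a * y ^ 2 + b * y = c) :
    x = y := by
  have hxb : 0 < a * x + b := by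
    refine pos_of_mul_pos_right (a := x) ?_ hx.le
    linarith [show x * (a * x + b) = c by linear_combination hxc]
  have hfactor : (x - y) * (a * (x + y) + b) = 0 := by linear_combination hxc - hyc
  rcases mul_eq_zero.1 hfactor with h | h
  · linarith
  · linarith [mul_nonneg ha hy.le]

theorem existsUnique_pos_quadratic_root {a c : ℝ} (b : ℝ) (ha : 0 < a) (hc : 0 < c) :
    ∃! x, 0 < x ∧ a * x ^ 2 + b * x = c := by
  obtain ⟨x, hx, hxc⟩ := exists_pos_quadratic_root b ha hc
  exact ⟨x, ⟨hx, hxc⟩, fun y ⟨hy, hyc⟩ => eq_of_pos_quadratic_roots ha.le hc hy hx hyc hxc⟩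

def IsEquilibrium (ω γ M₁ M₂ : ℝ) (p : ℝ × ℝ × ℝ) : Prop :=
  (0 ≤ p.1 ∧ 0 ≤ p.2.1 ∧ 0 ≤ p.2.2) ∧
    ω * p.1 + γ * p.2.2 = M₁ ∧
    γ * (p.2.1 + p.2.2) = M₂ ∧
    p.1 * p.2.1 = p.2.2

namespace IsEquilibrium

variable {ω γ M₁ M₂ : ℝ} {p q : ℝ × ℝ × ℝ}

theorem pos (hM₁ : 0 < M₁) (hM₂ : 0 < M₂) (hp : IsEquilibrium ω γ M₁ M₂ p) :
    0 < p.1 ∧ 0 < p.2.1 ∧ 0 < p.2.2 := by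
  obtain ⟨⟨hu, hw, -⟩, hmass₁, hmass₂, hprod⟩ := hp
  have hu' : 0 < p.1 := by
    refine hu.lt_of_ne fun h => hM₁.ne ?_
    rw [← hmass₁, ← hprod, ← h]
    ring
  have hw' : 0 < p.2.1 := by
    refine hw.lt_of_ne fun h => hM₂.ne ?_
    rw [← hmass₂, ← hprod, ← h]
    ring
  exact ⟨hu', hw', hprod ▸ mul_pos hu' hw'⟩

theorem quadratic (hp : IsEquilibrium ω γ M₁ M₂ p) :
    ω * p.1 ^ 2 + (M₂ - M₁ + ω) * p.1 = M₁ := by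
  obtain ⟨-, hmass₁, hmass₂, hprod⟩ := hp
  linear_combination (p.1 + 1) * hmass₁ - p.1 * hmass₂ + γ * hprod

theorem eq_of_fst_eq (hγ : γ ≠ 0) (hp : IsEquilibrium ω γ M₁ M₂ p)
    (hq : IsEquilibrium ω γ M₁ M₂ q) (h : p.1 = q.1) : p = q := by
  obtain ⟨-, hp₁, hp₂, -⟩ := hp
  obtain ⟨-, hq₁, hq₂, -⟩ := hq
  have hz : p.2.2 = q.2.2 := mul_left_cancel₀ hγ (by rw [h] at hp₁; linarith)
  have hw : p.2.1 = q.2.1 := mul_left_cancel₀ hγ (by rw [hz] at hp₂; linear_combination hp₂ - hq₂)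
  exact Prod.ext h (Prod.ext hw hz)

end IsEquilibrium

-- `w` and `z` are read off the conservation laws; they share the sign of `u w = z` and have
-- positive sum `M₂ / γ`, hence are nonnegative.
theorem isEquilibrium_of_quadratic {ω γ M₁ M₂ u : ℝ} (hγ : 0 < γ) (hM₂ : 0 < M₂) (hu : 0 < u)
    (hroot : ω * u ^ 2 + (M₂ - M₁ + ω) * u = M₁) :
    IsEquilibrium ω γ M₁ M₂ (u, (M₂ - M₁ + ω * u) / γ, (M₁ - ω * u) / γ) := by
  have hprod : u * ((M₂ - M₁ + ω * u) / γ) = (M₁ - ω * u) / γ := by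
    rw [mul_div_assoc']
    congr 1
    linear_combination hroot
  have hsum : 0 < (M₂ - M₁ + ω * u) / γ + (M₁ - ω * u) / γ := by
    rw [← add_div]
    exact div_pos (by linarith) hγ
  have hw : 0 ≤ (M₂ - M₁ + ω * u) / γ := by
    by_contra! h
    nlinarith [mul_neg_of_pos_of_neg hu h]
  refine ⟨⟨hu.le, hw, hprod ▸ mul_nonneg hu.le hw⟩, ?_, ?_, hprod⟩
  · field_simp
    ring
  · field_simp
    ring

/-- Well-posedness of the algebraic equilibrium system: for `ω, γ, M₁, M₂ > 0` there is a
unique triple `(u∞, w∞, z∞)` of nonnegative reals with `ω u∞ + γ z∞ = M₁`,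
`γ (w∞ + z∞) = M₂` and `u∞ w∞ = z∞`; moreover each component is strictly positive. -/
theorem equilibrium_system_wellposed (ω γ M₁ M₂ : ℝ)
    (hω : 0 < ω) (hγ : 0 < γ) (hM₁ : 0 < M₁) (hM₂ : 0 < M₂) :
    (∃! p : ℝ × ℝ × ℝ,
        (0 ≤ p.1 ∧ 0 ≤ p.2.1 ∧ 0 ≤ p.2.2) ∧
        ω * p.1 + γ * p.2.2 = M₁ ∧
        γ * (p.2.1 + p.2.2) = M₂ ∧
        p.1 * p.2.1 = p.2.2) ∧
    ∀ p : ℝ × ℝ × ℝ,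
      ((0 ≤ p.1 ∧ 0 ≤ p.2.1 ∧ 0 ≤ p.2.2) ∧
        ω * p.1 + γ * p.2.2 = M₁ ∧
        γ * (p.2.1 + p.2.2) = M₂ ∧
        p.1 * p.2.1 = p.2.2) →
      0 < p.1 ∧ 0 < p.2.1 ∧ 0 < p.2.2 := by
  show (∃! p, IsEquilibrium ω γ M₁ M₂ p) ∧ ∀ p, IsEquilibrium ω γ M₁ M₂ p → _
  refine ⟨?_, fun p hp => hp.pos hM₁ hM₂⟩
  obtain ⟨u, ⟨hu, hroot⟩, hunique⟩ := existsUnique_pos_quadratic_root (M₂ - M₁ + ω) hω hM₁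
  have hequil := isEquilibrium_of_quadratic hγ hM₂ hu hroot
  refine ⟨_, hequil, fun p hp => hp.eq_of_fst_eq hγ.ne' hequil ?_⟩
  exact hunique p.1 ⟨(hp.pos hM₁ hM₂).1, hp.quadratic⟩
end

section
/- Let (Ω, μ) and (Γ, ν) be finite measure spaces with μ(Ω) > 0 and ν(Γ) > 0, let M₁, M₂ > 0, and let u_∞, w_∞, z_∞ > 0 be the constants satisfying μ(Ω) u_∞ + ν(Γ) z_∞ = M₁, ν(Γ)(w_∞ + z_∞) = M₂ and u_∞ w_∞ = z_∞. Then there exists a constant C > 0, depending only on M₁ and M₂, such that for all nonnegative measurable functions u : Ω → ℝ and w, z : Γ → ℝ with u(log u − 1) ∈ L¹(μ), w(log w − 1), z(log z − 1) ∈ L¹(ν), satisfying the conservation laws ∫_Ω u dμ + ∫_Γ z dν = M₁ and ∫_Γ (w + z) dν = M₂, one has E(u,w,z) − E(u_∞, w_∞, z_∞) ≥ C ( ‖u − u_∞‖_{L¹(μ)}² + ‖w − w_∞‖_{L¹(ν)}² + ‖z − z_∞‖_{L¹(ν)}² ). -/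
open MeasureTheory Real Set InformationTheory

/-!
Because `z∞ = u∞ w∞`, the terms linear in `log u∞`, `log w∞`, `log z∞` cancel under the
conservation laws, so the relative entropy is the sum of the three divergences
`∫ c · klFun (f / c)` of each species `f` from its equilibrium value `c`. Each divergence controls
`‖f - c‖₁²`: the elementary inequality `3 (t - 1)² ≤ (2t + 4) klFun t` followed by Cauchy–Schwarz
with weight `(2f + 4c) / 3` gives
`‖f - c‖₁² ≤ (2‖f‖₁ + 4c·μ(univ)) / 3 · ∫ c · klFun (f / c)`,
and the weight is bounded by the total masses `M₁ + M₂`.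
-/

lemma monotoneOn_add_one_mul_log_sub :
    MonotoneOn (fun t : ℝ => (t + 1) * log t - 2 * (t - 1)) (Ioi 0) := by
  have hderiv : ∀ t ∈ Ioi (0 : ℝ), HasDerivAt (fun t : ℝ => (t + 1) * log t - 2 * (t - 1))
      (log t - (1 - t⁻¹)) t := by
    intro t (ht : 0 < t)
    refine ((((hasDerivAt_id' t).add_const 1).mul (hasDerivAt_log ht.ne')).sub
      (((hasDerivAt_id' t).sub_const 1).const_mul 2)).congr_deriv ?_
    field_simp
    ring
  refine monotoneOn_of_hasDerivWithinAt_nonneg (f' := fun t => log t - (1 - t⁻¹)) (convex_Ioi 0)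
    (fun t ht => (hderiv t ht).continuousAt.continuousWithinAt) ?_ ?_ <;> rw [interior_Ioi]
  · exact fun t ht => (hderiv t ht).hasDerivWithinAt
  · exact fun t ht => sub_nonneg.2 (one_sub_inv_le_log_of_pos ht)

lemma three_mul_sq_sub_one_le_klFun {t : ℝ} (ht : 0 ≤ t) :
    3 * (t - 1) ^ 2 ≤ (2 * t + 4) * klFun t := by
  set F : ℝ → ℝ := fun t => (t + 1) * log t - 2 * (t - 1)
  set G : ℝ → ℝ := fun t => (2 * t + 4) * klFun t - 3 * (t - 1) ^ 2
  have hderiv : ∀ t ∈ Ioi (0 : ℝ), HasDerivAt G (4 * F t) t := by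
    intro t (ht : 0 < t)
    refine ((((hasDerivAt_id' t).const_mul 2).add_const 4).mul (hasDerivAt_klFun ht.ne')).sub
      ((((hasDerivAt_id' t).sub_const 1).pow 2).const_mul 3) |>.congr_deriv ?_
    simp only [F, klFun_apply]
    ring
  have hdiff : DifferentiableOn ℝ G (Ioi 0) :=
    fun t ht => (hderiv t ht).differentiableAt.differentiableWithinAt
  have hF1 : F 1 = 0 := by simp [F]
  have hmin : IsMinOn G (Ici 0) 1 := by
    refine isMinOn_Ici_of_deriv (by fun_prop) (by fun_prop)
      (hdiff.mono Ioo_subset_Ioi_self) (hdiff.mono (Ioi_subset_Ioi zero_le_one)) ?_ ?_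
    · intro t ht
      rw [(hderiv t ht.1).deriv]
      have := monotoneOn_add_one_mul_log_sub ht.1 (mem_Ioi.2 one_pos) ht.2.le
      linarith
    · intro t (ht : 1 < t)
      rw [(hderiv t (one_pos.trans ht)).deriv]
      have := monotoneOn_add_one_mul_log_sub (mem_Ioi.2 one_pos) (one_pos.trans ht) ht.le
      linarith
  have : G 1 ≤ G t := hmin (mem_Ici.2 ht)
  simp only [G, klFun_one] at this
  linarith

lemma three_mul_sq_sub_le_mul_klFun_div {a b : ℝ} (ha : 0 ≤ a) (hb : 0 < b) :
    3 * (a - b) ^ 2 ≤ (2 * a + 4 * b) * (b * klFun (a / b)) := by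
  have hb₀ : b ≠ 0 := hb.ne'
  calc 3 * (a - b) ^ 2 = b ^ 2 * (3 * (a / b - 1) ^ 2) := by field_simp
    _ ≤ b ^ 2 * ((2 * (a / b) + 4) * klFun (a / b)) :=
        mul_le_mul_of_nonneg_left (three_mul_sq_sub_one_le_klFun (div_nonneg ha hb.le))
          (sq_nonneg b)
    _ = (2 * a + 4 * b) * (b * klFun (a / b)) := by field_simp

lemma mul_klFun_div (a : ℝ) {b : ℝ} (hb : b ≠ 0) :
    b * klFun (a / b) = a * (log a - 1) - log b * a + b := by
  rcases eq_or_ne a 0 with rfl | ha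
  · simp [klFun_zero]
  · rw [klFun_apply, log_div ha hb]
    field_simp
    ring

section Integral

variable {α : Type*} [MeasurableSpace α] {μ : Measure α}

lemma sq_integral_abs_le_integral_mul_integral {g h k : α → ℝ} (hh : Integrable h μ)
    (hk : Integrable k μ) (h0 : ∀ x, 0 ≤ h x) (k0 : ∀ x, 0 ≤ k x)
    (hgk : ∀ x, g x ^ 2 ≤ h x * k x) :
    (∫ x, |g x| ∂μ) ^ 2 ≤ (∫ x, h x ∂μ) * ∫ x, k x ∂μ := by
  have memLp_sqrt : ∀ {f : α → ℝ}, Integrable f μ → (∀ x, 0 ≤ f x) →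
      MemLp (fun x => √(f x)) 2 μ := by
    intro f hf f0
    refine (memLp_two_iff_integrable_sq (continuous_sqrt.comp_aestronglyMeasurable hf.1)).2 ?_
    simpa only [sq_sqrt (f0 _)] using hf
  have hholder := integral_mul_le_Lp_mul_Lq_of_nonneg HolderConjugate.two_two
    (.of_forall fun x => sqrt_nonneg (h x)) (.of_forall fun x => sqrt_nonneg (k x))
    (by simpa using memLp_sqrt hh h0) (by simpa using memLp_sqrt hk k0)
  simp only [rpow_two, sq_sqrt (h0 _), sq_sqrt (k0 _), ← sqrt_eq_rpow] at hholder
  have hle : ∫ x, |g x| ∂μ ≤ ∫ x, √(h x) * √(k x) ∂μ := by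
    refine integral_mono_of_nonneg (.of_forall fun x => abs_nonneg _)
      ((memLp_sqrt hh h0).integrable_mul (memLp_sqrt hk k0)) (.of_forall fun x => ?_)
    show |g x| ≤ √(h x) * √(k x)
    rw [← sqrt_mul (h0 x)]
    exact abs_le_sqrt (hgk x)
  calc (∫ x, |g x| ∂μ) ^ 2 ≤ (√(∫ x, h x ∂μ) * √(∫ x, k x ∂μ)) ^ 2 :=
        pow_le_pow_left₀ (integral_nonneg fun x => abs_nonneg _) (hle.trans hholder) 2
    _ = (∫ x, h x ∂μ) * ∫ x, k x ∂μ := by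
        rw [mul_pow, sq_sqrt (integral_nonneg h0), sq_sqrt (integral_nonneg k0)]

variable [IsFiniteMeasure μ] {f : α → ℝ} {c : ℝ}

lemma integrable_mul_klFun_div (hc : c ≠ 0) (hf : Integrable f μ)
    (hfe : Integrable (fun x => f x * (log (f x) - 1)) μ) :
    Integrable (fun x => c * klFun (f x / c)) μ := by
  simp_rw [mul_klFun_div _ hc]
  exact (hfe.sub (hf.const_mul _)).add (integrable_const c)

lemma integral_mul_klFun_div (hc : c ≠ 0) (hf : Integrable f μ)
    (hfe : Integrable (fun x => f x * (log (f x) - 1)) μ) :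
    ∫ x, c * klFun (f x / c) ∂μ
      = ∫ x, f x * (log (f x) - 1) ∂μ - log c * ∫ x, f x ∂μ + c * μ.real univ := by
  have hfe' : Integrable (fun x => f x * (log (f x) - 1) - log c * f x) μ :=
    hfe.sub (hf.const_mul _)
  simp_rw [mul_klFun_div _ hc]
  rw [integral_add hfe' (integrable_const c),
    integral_sub hfe (hf.const_mul _), integral_const_mul, integral_const, smul_eq_mul, mul_comm c]

lemma sq_integral_abs_sub_le_mul_integral_klFun (hc : 0 < c) (hf0 : ∀ x, 0 ≤ f x)
    (hf : Integrable f μ) (hfe : Integrable (fun x => f x * (log (f x) - 1)) μ) {M : ℝ}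
    (hf_mass : ∫ x, f x ∂μ ≤ M) (hc_mass : c * μ.real univ ≤ M) :
    (∫ x, |f x - c| ∂μ) ^ 2 ≤ 2 * M * ∫ x, c * klFun (f x / c) ∂μ := by
  have hkl0 : ∀ x, 0 ≤ c * klFun (f x / c) :=
    fun x => mul_nonneg hc.le (klFun_nonneg (div_nonneg (hf0 x) hc.le))
  have hweight : Integrable (fun x => (2 * f x + 4 * c) / 3) μ :=
    ((hf.const_mul 2).add (integrable_const (4 * c))).div_const 3
  have hCS := sq_integral_abs_le_integral_mul_integral hweight
    (integrable_mul_klFun_div hc.ne' hf hfe) (fun x => by linarith [hf0 x]) hkl0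
    (g := fun x => f x - c) fun x => by
      linarith [three_mul_sq_sub_le_mul_klFun_div (hf0 x) hc]
  rw [integral_div, integral_add (hf.const_mul 2) (integrable_const _), integral_const_mul,
    integral_const, smul_eq_mul] at hCS
  exact hCS.trans (mul_le_mul_of_nonneg_right (by linarith) (integral_nonneg hkl0))

end Integral

theorem csiszar_kullback_pinsker_general (Ω Γ : Type*) [MeasurableSpace Ω] [MeasurableSpace Γ]
    (μ : Measure Ω) (ν : Measure Γ) [IsFiniteMeasure μ] [IsFiniteMeasure ν]
    (M₁ M₂ : ℝ) (hM₁ : 0 < M₁) (hM₂ : 0 < M₂)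
    (uinf winf zinf : ℝ) (huinf : 0 < uinf) (hwinf : 0 < winf) (hzinf : 0 < zinf)
    (heq1 : (μ Set.univ).toReal * uinf + (ν Set.univ).toReal * zinf = M₁)
    (heq2 : (ν Set.univ).toReal * (winf + zinf) = M₂)
    (heq3 : uinf * winf = zinf) :
    ∃ C > 0, ∀ (u : Ω → ℝ) (w z : Γ → ℝ),
      Measurable u → Measurable w → Measurable z →
      (∀ x, 0 ≤ u x) → (∀ y, 0 ≤ w y) → (∀ y, 0 ≤ z y) →
      Integrable u μ → Integrable w ν → Integrable z ν →
      Integrable (fun x => u x * (Real.log (u x) - 1)) μ →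
      Integrable (fun y => w y * (Real.log (w y) - 1)) ν →
      Integrable (fun y => z y * (Real.log (z y) - 1)) ν →
      (∫ x, u x ∂μ) + (∫ y, z y ∂ν) = M₁ →
      (∫ y, (w y + z y) ∂ν) = M₂ →
      C * ((∫ x, |u x - uinf| ∂μ) ^ 2 + (∫ y, |w y - winf| ∂ν) ^ 2
            + (∫ y, |z y - zinf| ∂ν) ^ 2)
        ≤ ((∫ x, u x * (Real.log (u x) - 1) ∂μ)
            + (∫ y, w y * (Real.log (w y) - 1) ∂ν)
            + (∫ y, z y * (Real.log (z y) - 1) ∂ν))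
          - ((μ Set.univ).toReal * (uinf * (Real.log uinf - 1))
            + (ν Set.univ).toReal * (winf * (Real.log winf - 1))
            + (ν Set.univ).toReal * (zinf * (Real.log zinf - 1))) := by
  refine ⟨1 / (2 * (M₁ + M₂)), by positivity, ?_⟩
  intro u w z _ _ _ hu0 hw0 hz0 hu hw hz hue hwe hze hmass₁ hmass₂
  rw [integral_add hw hz] at hmass₂
  have hlog : log zinf = log uinf + log winf := by rw [← heq3, log_mul huinf.ne' hwinf.ne']
  have hentropy : (∫ x, u x * (log (u x) - 1) ∂μ) + (∫ y, w y * (log (w y) - 1) ∂ν)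
        + (∫ y, z y * (log (z y) - 1) ∂ν)
        - ((μ univ).toReal * (uinf * (log uinf - 1)) + (ν univ).toReal * (winf * (log winf - 1))
          + (ν univ).toReal * (zinf * (log zinf - 1)))
      = (∫ x, uinf * klFun (u x / uinf) ∂μ) + (∫ y, winf * klFun (w y / winf) ∂ν)
        + ∫ y, zinf * klFun (z y / zinf) ∂ν := by
    rw [integral_mul_klFun_div huinf.ne' hu hue, integral_mul_klFun_div hwinf.ne' hw hwe,
      integral_mul_klFun_div hzinf.ne' hz hze, measureReal_def, measureReal_def]
    linear_combination (∫ y, z y ∂ν - (ν univ).toReal * zinf) * hlog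
      + log uinf * (hmass₁ - heq1) + log winf * (hmass₂ - heq2)
  have hIu : 0 ≤ ∫ x, u x ∂μ := integral_nonneg hu0
  have hIz : 0 ≤ ∫ y, z y ∂ν := integral_nonneg hz0
  have hμu : 0 ≤ (μ univ).toReal * uinf := mul_nonneg ENNReal.toReal_nonneg huinf.le
  have hνz : 0 ≤ (ν univ).toReal * zinf := mul_nonneg ENNReal.toReal_nonneg hzinf.le
  have hu_bound := sq_integral_abs_sub_le_mul_integral_klFun huinf hu0 hu hue
    (M := M₁ + M₂) (by linarith) (by rw [measureReal_def]; linarith)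
  have hw_bound := sq_integral_abs_sub_le_mul_integral_klFun hwinf hw0 hw hwe
    (M := M₁ + M₂) (by linarith) (by rw [measureReal_def]; linarith)
  have hz_bound := sq_integral_abs_sub_le_mul_integral_klFun hzinf hz0 hz hze
    (M := M₁ + M₂) (by linarith) (by rw [measureReal_def]; linarith)
  rw [hentropy, one_div, inv_mul_le_iff₀ (by positivity)]
  linarith

/-- Theorem 5.1 of the paper: Csiszar–Kullback–Pinsker-type lower bound for the relative
entropy `E(u,w,z) − E(u∞,w∞,z∞)` of the coupled bulk–surface system in terms of squared
`L¹` distances to the equilibrium, valid for all nonnegative functions satisfying the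
conservation laws. -/
theorem csiszar_kullback_pinsker (Ω Γ : Type*) [MeasurableSpace Ω] [MeasurableSpace Γ]
    (μ : Measure Ω) (ν : Measure Γ) [IsFiniteMeasure μ] [IsFiniteMeasure ν]
    (hμ : 0 < μ Set.univ) (hν : 0 < ν Set.univ)
    (M₁ M₂ : ℝ) (hM₁ : 0 < M₁) (hM₂ : 0 < M₂)
    (uinf winf zinf : ℝ) (huinf : 0 < uinf) (hwinf : 0 < winf) (hzinf : 0 < zinf)
    (heq1 : (μ Set.univ).toReal * uinf + (ν Set.univ).toReal * zinf = M₁)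
    (heq2 : (ν Set.univ).toReal * (winf + zinf) = M₂)
    (heq3 : uinf * winf = zinf) :
    ∃ C > 0, ∀ (u : Ω → ℝ) (w z : Γ → ℝ),
      Measurable u → Measurable w → Measurable z →
      (∀ x, 0 ≤ u x) → (∀ y, 0 ≤ w y) → (∀ y, 0 ≤ z y) →
      Integrable u μ → Integrable w ν → Integrable z ν →
      Integrable (fun x => u x * (Real.log (u x) - 1)) μ →
      Integrable (fun y => w y * (Real.log (w y) - 1)) ν →
      Integrable (fun y => z y * (Real.log (z y) - 1)) ν →
      (∫ x, u x ∂μ) + (∫ y, z y ∂ν) = M₁ →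
      (∫ y, (w y + z y) ∂ν) = M₂ →
      C * ((∫ x, |u x - uinf| ∂μ) ^ 2 + (∫ y, |w y - winf| ∂ν) ^ 2
            + (∫ y, |z y - zinf| ∂ν) ^ 2)
        ≤ ((∫ x, u x * (Real.log (u x) - 1) ∂μ)
            + (∫ y, w y * (Real.log (w y) - 1) ∂ν)
            + (∫ y, z y * (Real.log (z y) - 1) ∂ν))
          - ((μ Set.univ).toReal * (uinf * (Real.log uinf - 1))
            + (ν Set.univ).toReal * (winf * (Real.log winf - 1))
            + (ν Set.univ).toReal * (zinf * (Real.log zinf - 1))) :=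
  csiszar_kullback_pinsker_general Ω Γ μ ν M₁ M₂ hM₁ hM₂ uinf winf zinf huinf hwinf hzinf heq1 heq2
    heq3
end

section
/- For all real numbers x, y > 0, x·log(x/y) − (x − y) ≥ (x − y)² / (2x + 2y). -/
/-! Both sides are compared with the squared Hellinger distance `(√x - √y)²`: it dominates
the left side since `(x - y)² = (√x - √y)² (√x + √y)²` and `(√x + √y)² ≤ 2x + 2y`, and is dominated
by the right side by `log t ≤ t - 1` applied to `t = √y / √x`, as `log (x / y) = -2 log (√y / √x)`. -/

open Real

lemma sq_sub_div_le_sq_sub_sqrt {x y : ℝ} (hx : 0 ≤ x) (hy : 0 ≤ y) :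
    (x - y) ^ 2 / (2 * x + 2 * y) ≤ (√x - √y) ^ 2 := by
  have hsq : (x - y) ^ 2 = (√x - √y) ^ 2 * (√x + √y) ^ 2 := by
    rw [← mul_pow, mul_comm, ← sq_sub_sq, sq_sqrt hx, sq_sqrt hy]
  have hsum : (√x + √y) ^ 2 ≤ 2 * x + 2 * y := by
    nlinarith [sq_nonneg (√x - √y), sq_sqrt hx, sq_sqrt hy]
  refine div_le_of_le_mul₀ (by positivity) (sq_nonneg _) ?_
  rw [hsq]
  exact mul_le_mul_of_nonneg_left hsum (sq_nonneg _)

lemma sq_sub_sqrt_le_mul_log_div_sub {x y : ℝ} (hx : 0 < x) (hy : 0 < y) :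
    (√x - √y) ^ 2 ≤ x * log (x / y) - (x - y) := by
  have hsx : 0 < √x := sqrt_pos.mpr hx
  have hlog : log (x / y) = -2 * log (√y / √x) := by
    have hdiv : x / y = (√y / √x)⁻¹ ^ 2 := by
      rw [inv_div, div_pow, sq_sqrt hx.le, sq_sqrt hy.le]
    rw [hdiv, log_pow, log_inv]
    ring
  have hle : log (√y / √x) ≤ √y / √x - 1 := log_le_sub_one_of_pos (by positivity)
  have hx_div : x * (√y / √x) = √x * √y := by
    field_simp
    rw [sq_sqrt hx.le]
  calc (√x - √y) ^ 2 = x * (-2 * (√y / √x - 1)) - (x - y) := by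
        linear_combination 2 * hx_div + sq_sqrt hx.le + sq_sqrt hy.le
    _ ≤ x * log (x / y) - (x - y) := by
        rw [hlog]; gcongr x * ?_ - _; linarith

/-- Elementary entropy inequality (inequality (5.8) of the paper):
`x log(x/y) − (x − y) ≥ (x − y)² / (2x + 2y)` for `x, y > 0`. -/
theorem entropy_lower_bound (x y : ℝ) (hx : 0 < x) (hy : 0 < y) :
    (x - y) ^ 2 / (2 * x + 2 * y) ≤ x * Real.log (x / y) - (x - y) :=
  (sq_sub_div_le_sq_sub_sqrt hx.le hy.le).trans (sq_sub_sqrt_le_mul_log_div_sub hx hy)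
end

section
/- Define φ : (0,∞)² → ℝ by φ(x,y) = (x·log(x/y) − (x − y)) / (√x − √y)² for x ≠ y, and φ(y,y) = 2. Then (i) φ is homogeneous of degree zero, i.e. φ(x,y) = φ(x/y, 1) for all x, y > 0; and (ii) for every fixed y > 0, the map x ↦ φ(x,y) is nondecreasing on (0,∞). -/
open Real Set

/-- The Bregman-type entropy ratio `φ(x,y) = (x log(x/y) − (x−y)) / (√x − √y)²`,
extended by its limiting value `2` on the diagonal. -/
noncomputable def entropyRatio (x y : ℝ) : ℝ :=
  if x = y then 2
  else (x * Real.log (x / y) - (x - y)) / (Real.sqrt x - Real.sqrt y) ^ 2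

noncomputable def qq (t : ℝ) : ℝ := (t * Real.log t - (t - 1)) / (Real.sqrt t - 1) ^ 2

lemma sign_helper {F : ℝ → ℝ} (hF : MonotoneOn F (Set.Ioi 0)) (h1 : F 1 = 0)
    {u : ℝ} (hu : 0 < u) : 0 ≤ (u - 1) * F u := by
  rcases le_total u 1 with h | h
  · have hFu : F u ≤ 0 := h1 ▸ hF (by exact hu) (by norm_num) h
    nlinarith
  · have hFu : 0 ≤ F u := h1 ▸ hF (by norm_num) (by exact hu) h
    nlinarith

lemma lemA {u : ℝ} (hu : 0 < u) : 0 ≤ (u - 1) * (u ^ 2 - 1 - 2 * u * Real.log u) := by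
  have key : MonotoneOn (fun u : ℝ => u ^ 2 - 1 - 2 * (u * Real.log u)) (Set.Ioi 0) := by
    have hder : ∀ x ∈ Set.Ioi (0:ℝ), HasDerivAt (fun u : ℝ => u ^ 2 - 1 - 2 * (u * Real.log u))
        (2 * x - (2 * (Real.log x + 1))) x := by
      intro x hx
      have h1 : HasDerivAt (fun u : ℝ => u ^ 2 - 1) (2 * x) x := by
        simpa using ((hasDerivAt_pow 2 x).sub_const 1)
      exact h1.sub ((Real.hasDerivAt_mul_log (ne_of_gt hx)).const_mul 2)
    apply monotoneOn_of_deriv_nonneg (convex_Ioi 0)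
    · exact fun x hx => (hder x hx).continuousAt.continuousWithinAt
    · rw [interior_Ioi]
      exact fun x hx => (hder x hx).differentiableAt.differentiableWithinAt
    · rw [interior_Ioi]
      intro x hx
      rw [(hder x hx).deriv]
      have := Real.log_le_sub_one_of_pos hx
      linarith
  have := sign_helper key (by norm_num) hu
  nlinarith [this]

lemma lemB {u : ℝ} (hu : 0 < u) : 0 ≤ (u - 1) * ((u + 1) * Real.log u - 2 * (u - 1)) := by
  have key : MonotoneOn (fun u : ℝ => (u + 1) * Real.log u - 2 * (u - 1)) (Set.Ioi 0) := by
    have hder : ∀ x ∈ Set.Ioi (0:ℝ), HasDerivAt (fun u : ℝ => (u + 1) * Real.log u - 2 * (u - 1))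
        ((1 * Real.log x + (x + 1) * x⁻¹) - 2 * 1) x := by
      intro x hx
      have h1 : HasDerivAt (fun u : ℝ => u + 1) 1 x := (hasDerivAt_id x).add_const 1
      have h2 : HasDerivAt Real.log x⁻¹ x := Real.hasDerivAt_log (ne_of_gt hx)
      have h3 : HasDerivAt (fun u : ℝ => 2 * (u - 1)) (2 * 1) x :=
        ((hasDerivAt_id x).sub_const 1).const_mul 2
      exact (h1.mul h2).sub h3
    apply monotoneOn_of_deriv_nonneg (convex_Ioi 0)
    · exact fun x hx => (hder x hx).continuousAt.continuousWithinAt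
    · rw [interior_Ioi]
      exact fun x hx => (hder x hx).differentiableAt.differentiableWithinAt
    · rw [interior_Ioi]
      intro x hx
      rw [(hder x hx).deriv]
      have h4 : Real.log x⁻¹ ≤ x⁻¹ - 1 := Real.log_le_sub_one_of_pos (inv_pos.mpr hx)
      rw [Real.log_inv] at h4
      have hx' : (0:ℝ) < x := hx
      have : (x + 1) * x⁻¹ = 1 + x⁻¹ := by field_simp
      rw [this]
      linarith
  have := sign_helper key (by norm_num) hu
  nlinarith [this]

lemma sqrt_ne_one {t : ℝ} (ht : 0 ≤ t) (hne : t ≠ 1) : Real.sqrt t ≠ 1 := by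
  intro h
  apply hne
  rw [← Real.sq_sqrt ht, h]; norm_num


lemma qq_deriv_form {t : ℝ} (ht : 0 < t) (hne : t ≠ 1) :
    HasDerivAt qq
      ((Real.log t * (Real.sqrt t - 1) ^ 2
        - (t * Real.log t - (t - 1)) * ((Real.sqrt t - 1) / Real.sqrt t))
          / ((Real.sqrt t - 1) ^ 2) ^ 2) t := by
  have hsne : Real.sqrt t ≠ 1 := sqrt_ne_one ht.le hne
  have hspos : 0 < Real.sqrt t := Real.sqrt_pos.mpr ht
  have hden : ((Real.sqrt t - 1) ^ 2 : ℝ) ≠ 0 := pow_ne_zero 2 (sub_ne_zero.mpr hsne)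
  have hnum : HasDerivAt (fun t : ℝ => t * Real.log t - (t - 1)) (Real.log t + 1 - 1) t :=
    (Real.hasDerivAt_mul_log ht.ne').sub ((hasDerivAt_id t).sub_const 1)
  have hd : HasDerivAt (fun t : ℝ => (Real.sqrt t - 1) ^ 2)
      ((2 : ℕ) * (Real.sqrt t - 1) ^ 1 * (1 / (2 * Real.sqrt t))) t :=
    ((Real.hasDerivAt_sqrt ht.ne').sub_const 1).pow 2
  have h := hnum.div hd hden
  refine HasDerivAt.congr_deriv (f := qq) h ?_
  have hs0 : Real.sqrt t ≠ 0 := hspos.ne'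
  push_cast
  field_simp
  ring


lemma qq_deriv_nonneg {t : ℝ} (ht : 0 < t) (hne : t ≠ 1) :
    0 ≤ (Real.log t * (Real.sqrt t - 1) ^ 2
        - (t * Real.log t - (t - 1)) * ((Real.sqrt t - 1) / Real.sqrt t))
          / ((Real.sqrt t - 1) ^ 2) ^ 2 := by
  have hspos : 0 < Real.sqrt t := Real.sqrt_pos.mpr ht
  set u := Real.sqrt t with hudef
  have hu2 : u ^ 2 = t := Real.sq_sqrt ht.le
  have hlog : Real.log t = 2 * Real.log u := by
    rw [← hu2, Real.log_pow]; push_cast; ring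
  apply div_nonneg _ (by positivity)
  have hnum : Real.log t * (u - 1) ^ 2 - (t * Real.log t - (t - 1)) * ((u - 1) / u)
      = ((u - 1) * (u ^ 2 - 1 - 2 * u * Real.log u)) / u := by
    rw [hlog, ← hu2]
    field_simp
    ring
  rw [hnum]
  exact div_nonneg (lemA hspos) hspos.le

lemma qq_mono_Ioo : MonotoneOn qq (Set.Ioo (0 : ℝ) 1) := by
  apply monotoneOn_of_deriv_nonneg (convex_Ioo 0 1)
  · exact fun x hx => (qq_deriv_form hx.1 (ne_of_lt hx.2)).continuousAt.continuousWithinAt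
  · rw [interior_Ioo]
    exact fun x hx => (qq_deriv_form hx.1 (ne_of_lt hx.2)).differentiableAt.differentiableWithinAt
  · rw [interior_Ioo]
    intro x hx
    rw [(qq_deriv_form hx.1 (ne_of_lt hx.2)).deriv]
    exact qq_deriv_nonneg hx.1 (ne_of_lt hx.2)

lemma qq_mono_Ioi : MonotoneOn qq (Set.Ioi (1 : ℝ)) := by
  apply monotoneOn_of_deriv_nonneg (convex_Ioi 1)
  · exact fun x hx => (qq_deriv_form (lt_trans one_pos hx) (ne_of_gt hx)).continuousAt.continuousWithinAt
  · rw [interior_Ioi]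
    exact fun x hx =>
      (qq_deriv_form (lt_trans one_pos hx) (ne_of_gt hx)).differentiableAt.differentiableWithinAt
  · rw [interior_Ioi]
    intro x hx
    rw [(qq_deriv_form (lt_trans one_pos hx) (ne_of_gt hx)).deriv]
    exact qq_deriv_nonneg (lt_trans one_pos hx) (ne_of_gt hx)

lemma qq_le_two {t : ℝ} (ht : 0 < t) (hlt : t < 1) : qq t ≤ 2 := by
  have hspos : 0 < Real.sqrt t := Real.sqrt_pos.mpr ht
  have hsne : Real.sqrt t ≠ 1 := sqrt_ne_one ht.le (ne_of_lt hlt)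
  have hdpos : (0:ℝ) < (Real.sqrt t - 1) ^ 2 := by
    have := sub_ne_zero.mpr hsne
    positivity
  rw [qq, div_le_iff₀ hdpos]
  set u := Real.sqrt t with hudef
  have hu2 : u ^ 2 = t := Real.sq_sqrt ht.le
  have hlog : Real.log t = 2 * Real.log u := by
    rw [← hu2, Real.log_pow]; push_cast; ring
  have hult : u < 1 := by
    rw [← Real.sqrt_one]; exact Real.sqrt_lt_sqrt ht.le hlt
  rw [hlog, ← hu2]
  nlinarith [lemB hspos, mul_nonneg (lemB hspos) (sq_nonneg u), sq_nonneg ((u-1)^2),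
    sq_nonneg (u-1), hspos]

lemma two_le_qq {t : ℝ} (ht : 1 < t) : 2 ≤ qq t := by
  have ht0 : (0:ℝ) < t := lt_trans one_pos ht
  have hspos : 0 < Real.sqrt t := Real.sqrt_pos.mpr ht0
  have hsne : Real.sqrt t ≠ 1 := sqrt_ne_one ht0.le (ne_of_gt ht)
  have hdpos : (0:ℝ) < (Real.sqrt t - 1) ^ 2 := by
    have := sub_ne_zero.mpr hsne
    positivity
  rw [qq, le_div_iff₀ hdpos]
  set u := Real.sqrt t with hudef
  have hu2 : u ^ 2 = t := Real.sq_sqrt ht0.le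
  have hlog : Real.log t = 2 * Real.log u := by
    rw [← hu2, Real.log_pow]; push_cast; ring
  have hult : 1 < u := by
    rw [← Real.sqrt_one]; exact Real.sqrt_lt_sqrt (by norm_num) ht
  rw [hlog, ← hu2]
  nlinarith [lemB hspos, mul_nonneg (lemB hspos) (sq_nonneg u), sq_nonneg ((u-1)^2),
    sq_nonneg (u-1), hspos]

lemma er_one {t : ℝ} (hne : t ≠ 1) : entropyRatio t 1 = qq t := by
  rw [entropyRatio, if_neg hne, qq, div_one, Real.sqrt_one]

lemma er_homog (x y : ℝ) (hx : 0 < x) (hy : 0 < y) :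
    entropyRatio x y = entropyRatio (x / y) 1 := by
  by_cases hxy : x = y
  · subst hxy
    rw [entropyRatio, if_pos rfl, entropyRatio, if_pos (div_self hx.ne')]
  · have hq : x / y ≠ 1 := by
      intro h
      apply hxy
      field_simp at h
      linarith
    rw [entropyRatio, if_neg hxy, entropyRatio, if_neg hq, div_one,
      Real.sqrt_div hx.le, Real.sqrt_one]
    have hsx : Real.sqrt x ≠ Real.sqrt y := by
      intro h
      exact hxy (by rw [← Real.sq_sqrt hx.le, h, Real.sq_sqrt hy.le])
    set l := Real.log (x / y) with hl
    set sx := Real.sqrt x with hsxd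
    set sy := Real.sqrt y with hsyd
    have hsy : sy ≠ 0 := (Real.sqrt_pos.mpr hy).ne'
    have hd1 : sx - sy ≠ 0 := sub_ne_zero.mpr hsx
    have hy2 : sy ^ 2 = y := Real.sq_sqrt hy.le
    have hd2 : sx / sy - 1 ≠ 0 := by
      intro h
      apply hsx
      have : sx / sy = 1 := by linarith
      field_simp at this
      linarith
    rw [← hy2]
    field_simp

lemma g_mono : MonotoneOn (fun t : ℝ => entropyRatio t 1) (Set.Ioi (0 : ℝ)) := by
  intro a ha b hb hab
  simp only [Set.mem_Ioi] at ha hb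
  show entropyRatio a 1 ≤ entropyRatio b 1
  rcases eq_or_lt_of_le hab with rfl | hlt
  · exact le_refl _
  rcases lt_trichotomy b 1 with hb1 | hb1 | hb1
  · rw [er_one (ne_of_lt (lt_trans hlt hb1)), er_one (ne_of_lt hb1)]
    exact qq_mono_Ioo ⟨ha, lt_trans hlt hb1⟩ ⟨hb, hb1⟩ hab
  · subst hb1
    rw [er_one (ne_of_lt hlt), entropyRatio, if_pos rfl]
    exact qq_le_two ha hlt
  · rw [er_one (ne_of_gt hb1)]
    rcases lt_trichotomy a 1 with ha1 | ha1 | ha1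
    · rw [er_one (ne_of_lt ha1)]
      exact le_trans (qq_le_two ha ha1) (two_le_qq hb1)
    · subst ha1
      rw [entropyRatio, if_pos rfl]
      exact two_le_qq hb1
    · rw [er_one (ne_of_gt ha1)]
      exact qq_mono_Ioi ha1 hb1 hab

/-- The function `φ` is homogeneous of degree zero, `φ(x,y) = φ(x/y, 1)`, and for every
fixed `y > 0` the map `x ↦ φ(x,y)` is nondecreasing on `(0,∞)`. -/
theorem entropyRatio_homogeneous_and_monotone :
    (∀ x y : ℝ, 0 < x → 0 < y → entropyRatio x y = entropyRatio (x / y) 1) ∧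
    ∀ y : ℝ, 0 < y → MonotoneOn (fun x => entropyRatio x y) (Set.Ioi (0 : ℝ)) := by
  refine ⟨er_homog, ?_⟩
  intro y hy a ha b hb hab
  simp only [Set.mem_Ioi] at ha hb
  simp only
  rw [er_homog a y ha hy, er_homog b y hb hy]
  exact g_mono (Set.mem_Ioi.mpr (div_pos ha hy)) (Set.mem_Ioi.mpr (div_pos hb hy))
    (by gcongr)
end

section
/- Let (Γ, ν) be a finite measure space with ν(Γ) > 0 and let α, β > 0. Then there exists a constant K₃ > 0, depending only on α and β, with the following property: for all nonnegative functions A, B, C ∈ L²(ν) with A·B ∈ L²(ν), and all constants ā, b̄, c̄ ≥ 0 with ā² ≤ α, b̄² ≤ β and c̄² ≤ β, one has ‖AB − C‖²_{L²(ν)} ≥ (ν(Γ)/2)·(ā b̄ − c̄)² − K₃ ( ‖A − ā‖²_{L²(ν)} + ‖B − b̄‖²_{L²(ν)} + ‖C − c̄‖²_{L²(ν)} ). -/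
open MeasureTheory

set_option maxHeartbeats 1000000 in
/-- Pointwise quadratic lower bound used in Step 1 of Lemma 5.3. -/
theorem reaction_pointwise_aux (α β : ℝ) (hα : 0 < α) (hβ : 0 < β)
    (x u w a b c : ℝ) (hx0 : 0 ≤ x) (hu0 : 0 ≤ u) (hw0 : 0 ≤ w)
    (ha : 0 ≤ a) (hb : 0 ≤ b) (hc : 0 ≤ c)
    (haα : a ^ 2 ≤ α) (hbβ : b ^ 2 ≤ β) (hcβ : c ^ 2 ≤ β) :
    (a * b - c) ^ 2 / 2
      - (3 * ((Real.sqrt β + 1) ^ 2 + α + 1) + (α * β + β))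
        * ((x - a) ^ 2 + (u - b) ^ 2 + (w - c) ^ 2)
      ≤ (x * u - w) ^ 2 := by
  set sb := Real.sqrt β with hsb
  have hsb0 : 0 ≤ sb := Real.sqrt_nonneg β
  have hsbsq : sb ^ 2 = β := Real.sq_sqrt hβ.le
  have hbsb : b ≤ sb := by nlinarith
  have hS0 : (0:ℝ) ≤ (x - a) ^ 2 + (u - b) ^ 2 + (w - c) ^ 2 := by positivity
  rcases le_or_gt ((u - b) ^ 2) 1 with h1 | h1
  · -- small deviation of u from b
    have husb : u ≤ sb + 1 := by nlinarith
    have hd3 : ((x - a) * u + a * (u - b) - (w - c)) ^ 2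
        ≤ 3 * (((x - a) * u) ^ 2 + (a * (u - b)) ^ 2 + (w - c) ^ 2) := by
      nlinarith [sq_nonneg ((x - a) * u - a * (u - b)), sq_nonneg ((x - a) * u + (w - c)),
        sq_nonneg (a * (u - b) + (w - c))]
    have hpb : ((x - a) * u) ^ 2 ≤ (sb + 1) ^ 2 * (x - a) ^ 2 := by
      have h2 : u ^ 2 ≤ (sb + 1) ^ 2 := by nlinarith
      calc ((x - a) * u) ^ 2 = u ^ 2 * (x - a) ^ 2 := by ring
        _ ≤ (sb + 1) ^ 2 * (x - a) ^ 2 := mul_le_mul_of_nonneg_right h2 (sq_nonneg _)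
    have hqb : (a * (u - b)) ^ 2 ≤ α * (u - b) ^ 2 :=
      calc (a * (u - b)) ^ 2 = a ^ 2 * (u - b) ^ 2 := by ring
        _ ≤ α * (u - b) ^ 2 := mul_le_mul_of_nonneg_right haα (sq_nonneg _)
    have hdK : ((x - a) * u + a * (u - b) - (w - c)) ^ 2
        ≤ (3 * ((sb + 1) ^ 2 + α + 1) + (α * β + β))
          * ((x - a) ^ 2 + (u - b) ^ 2 + (w - c) ^ 2) := by
      have e1 : (0:ℝ) ≤ (sb + 1) ^ 2 * ((u - b) ^ 2 + (w - c) ^ 2) := by positivity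
      have e2 : (0:ℝ) ≤ α * ((x - a) ^ 2 + (w - c) ^ 2) := by positivity
      have e3 : (0:ℝ) ≤ (α * β + β) * ((x - a) ^ 2 + (u - b) ^ 2 + (w - c) ^ 2) := by
        positivity
      have e4 : (0:ℝ) ≤ (x - a) ^ 2 + (u - b) ^ 2 := by positivity
      have expand : (3 * ((sb + 1) ^ 2 + α + 1) + (α * β + β))
            * ((x - a) ^ 2 + (u - b) ^ 2 + (w - c) ^ 2)
          = 3 * ((sb + 1) ^ 2 * (x - a) ^ 2 + α * (u - b) ^ 2 + (w - c) ^ 2)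
            + (3 * ((sb + 1) ^ 2 * ((u - b) ^ 2 + (w - c) ^ 2))
              + 3 * (α * ((x - a) ^ 2 + (w - c) ^ 2))
              + 3 * ((x - a) ^ 2 + (u - b) ^ 2)
              + (α * β + β) * ((x - a) ^ 2 + (u - b) ^ 2 + (w - c) ^ 2)) := by
        ring
      rw [expand]
      linarith [hd3, hpb, hqb]
    have hts : (a * b - c) ^ 2 ≤ 2 * (x * u - w) ^ 2
        + 2 * (x * u - w - (a * b - c)) ^ 2 := by
      nlinarith [sq_nonneg (2 * (x * u - w) - (a * b - c))]
    have heq : (x * u - w - (a * b - c)) ^ 2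
        = ((x - a) * u + a * (u - b) - (w - c)) ^ 2 := by ring
    linarith [hts, hdK, heq]
  · -- large deviation: sum of squared deviations exceeds 1
    have hs : (a * b - c) ^ 2 / 2 ≤ α * β + β := by
      nlinarith [mul_nonneg (mul_nonneg ha hb) hc,
        mul_le_mul haα hbβ (sq_nonneg b) hα.le]
    have hKpos : (0:ℝ) < 3 * ((sb + 1) ^ 2 + α + 1) + (α * β + β) := by positivity
    have hS1 : (1:ℝ) ≤ (x - a) ^ 2 + (u - b) ^ 2 + (w - c) ^ 2 := by nlinarith
    have hSK : α * β + β
        ≤ (3 * ((sb + 1) ^ 2 + α + 1) + (α * β + β))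
          * ((x - a) ^ 2 + (u - b) ^ 2 + (w - c) ^ 2) := by
      nlinarith [mul_le_mul_of_nonneg_left hS1 hKpos.le, sq_nonneg (sb + 1)]
    nlinarith [sq_nonneg (x * u - w)]

set_option maxHeartbeats 1000000 in
/-- Step 1 of the proof of Lemma 5.3 of the paper: for constants `α, β > 0` there is
`K₃ > 0`, depending only on `α` and `β`, such that on any finite measure space `(Γ, ν)`
with `ν(Γ) > 0`, for all nonnegative `A, B, C ∈ L²(ν)` with `A·B ∈ L²(ν)` and all
constants `a, b, c ≥ 0` with `a² ≤ α`, `b² ≤ β`, `c² ≤ β`,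
`‖AB − C‖² ≥ (ν(Γ)/2)(ab − c)² − K₃(‖A − a‖² + ‖B − b‖² + ‖C − c‖²)`. -/
theorem reaction_term_lower_bound (α β : ℝ) (hα : 0 < α) (hβ : 0 < β) :
    ∃ K₃ > 0, ∀ (Γ : Type) (_ : MeasurableSpace Γ) (ν : Measure Γ),
      IsFiniteMeasure ν → 0 < ν Set.univ →
      ∀ A B C : Γ → ℝ,
        (∀ y, 0 ≤ A y) → (∀ y, 0 ≤ B y) → (∀ y, 0 ≤ C y) →
        MemLp A 2 ν → MemLp B 2 ν → MemLp C 2 ν →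
        MemLp (fun y => A y * B y) 2 ν →
        ∀ a b c : ℝ, 0 ≤ a → 0 ≤ b → 0 ≤ c →
          a ^ 2 ≤ α → b ^ 2 ≤ β → c ^ 2 ≤ β →
          ((ν Set.univ).toReal / 2) * (a * b - c) ^ 2
              - K₃ * ((∫ y, (A y - a) ^ 2 ∂ν) + (∫ y, (B y - b) ^ 2 ∂ν)
                  + (∫ y, (C y - c) ^ 2 ∂ν))
            ≤ ∫ y, (A y * B y - C y) ^ 2 ∂ν := by
  refine ⟨3 * ((Real.sqrt β + 1) ^ 2 + α + 1) + (α * β + β), by positivity, ?_⟩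
  intro Γ _ ν hfin hpos A B C hA0 hB0 hC0 hA hB hC hAB a b c ha hb hc haα hbβ hcβ
  set K₃ : ℝ := 3 * ((Real.sqrt β + 1) ^ 2 + α + 1) + (α * β + β) with hK₃
  have key : ∀ y, (a * b - c) ^ 2 / 2
      - K₃ * ((A y - a) ^ 2 + (B y - b) ^ 2 + (C y - c) ^ 2)
      ≤ (A y * B y - C y) ^ 2 := fun y =>
    reaction_pointwise_aux α β hα hβ (A y) (B y) (C y) a b c
      (hA0 y) (hB0 y) (hC0 y) ha hb hc haα hbβ hcβ
  have hiA : Integrable (fun y => (A y - a) ^ 2) ν := (hA.sub (memLp_const a)).integrable_sq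
  have hiB : Integrable (fun y => (B y - b) ^ 2) ν := (hB.sub (memLp_const b)).integrable_sq
  have hiC : Integrable (fun y => (C y - c) ^ 2) ν := (hC.sub (memLp_const c)).integrable_sq
  have hiR : Integrable (fun y => (A y * B y - C y) ^ 2) ν := (hAB.sub hC).integrable_sq
  have hiS : Integrable (fun y => K₃ * ((A y - a) ^ 2 + (B y - b) ^ 2 + (C y - c) ^ 2)) ν :=
    ((hiA.add hiB).add hiC).const_mul K₃
  have hiL : Integrable (fun y => (a * b - c) ^ 2 / 2
      - K₃ * ((A y - a) ^ 2 + (B y - b) ^ 2 + (C y - c) ^ 2)) ν :=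
    (integrable_const _).sub hiS
  have hiAB : Integrable (fun y => (A y - a) ^ 2 + (B y - b) ^ 2) ν := hiA.add hiB
  have hmono := integral_mono hiL hiR key
  rw [integral_sub (integrable_const _) hiS, integral_const, integral_const_mul,
    integral_add hiAB hiC, integral_add hiA hiB] at hmono
  have hsmul : ν.real Set.univ • ((a * b - c) ^ 2 / 2)
      = (ν Set.univ).toReal / 2 * (a * b - c) ^ 2 := by
    rw [smul_eq_mul, measureReal_def]; ring
  rw [hsmul] at hmono
  linarith [hmono]
end
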